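/- arXiv:1408.6878 — 8 statements merged into one kernel-verified Lean document; each statement's English description precedes it below -/
import Mathlib

section
/- In the classical College Admissions problem with strict preferences (all scores at each college distinct), a feasible matching x is stable if and only if for every application (a_i, c_j), the inequality (sum over colleges c_k with rank r_{ik} ≤ r_{ij} of x_{ik})·u_j + (sum over applicants a_h applying to c_j with s_{hj} > s_{ij} of x_{hj}) ≥ u_j holds. -/
open Finset

/-- Feasibility of a (0/1-encoded) matching `x` for a College Admissions
instance with application set `E` and upper quotas `u`: each variable is
binary, only actual applications can be matched, each applicant is assigned
to at most one college, and no college exceeds its quota. -/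
def Feasible {n m : ℕ} (E : Finset (Fin n × Fin m)) (u : Fin m → ℕ)
    (x : Fin n → Fin m → ℕ) : Prop :=
  (∀ i j, x i j ≤ 1) ∧ (∀ i j, x i j = 1 → (i, j) ∈ E) ∧
  (∀ i : Fin n, ∑ j, x i j ≤ 1) ∧ (∀ j : Fin m, ∑ i, x i j ≤ u j)

/-- Classical stability: there is no application `(i, j)` such that `i` is
unmatched or prefers `j` to her assigned college (rank `r`, lower is better),
while `j` has an unfilled place or admits an applicant with a lower score. -/
def Stable {n m : ℕ} (E : Finset (Fin n × Fin m)) (r s : Fin n → Fin m → ℕ)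
    (u : Fin m → ℕ) (x : Fin n → Fin m → ℕ) : Prop :=
  ¬ ∃ i j, (i, j) ∈ E ∧
    (∀ k, x i k = 1 → r i j < r i k) ∧
    ((∑ h, x h j) < u j ∨ ∃ h, x h j = 1 ∧ s h j < s i j)

/-- For a feasible matching of a classical College Admissions
instance with strict preferences, stability is equivalent to the family of
linear constraints (3) of Biró–McBride. -/
theorem stability_iff_IP {n m : ℕ} (E : Finset (Fin n × Fin m))
    (r s : Fin n → Fin m → ℕ) (u : Fin m → ℕ)
    (hrstrict : ∀ i j k, (i, j) ∈ E → (i, k) ∈ E → r i j = r i k → j = k)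
    (hsstrict : ∀ j i i', (i, j) ∈ E → (i', j) ∈ E → s i j = s i' j → i = i')
    (x : Fin n → Fin m → ℕ) (hx : Feasible E u x) :
    Stable E r s u x ↔
      ∀ i j, (i, j) ∈ E →
        u j ≤ (∑ k ∈ univ.filter fun k => r i k ≤ r i j, x i k) * u j +
          ∑ h ∈ univ.filter fun h => (h, j) ∈ E ∧ s i j < s h j, x h j := by
  obtain ⟨hbin, hE, hone, hquota⟩ := hx
  constructor
  · intro hst i j hij
    by_cases hk : ∃ k, r i k ≤ r i j ∧ x i k = 1
    · obtain ⟨k, hk1, hk2⟩ := hk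
      have h1 : 1 ≤ ∑ k ∈ univ.filter fun k => r i k ≤ r i j, x i k := by
        calc 1 = x i k := hk2.symm
        _ ≤ _ := Finset.single_le_sum (fun _ _ => Nat.zero_le _)
            (by simp [hk1])
      calc u j = 1 * u j := (one_mul _).symm
      _ ≤ _ := Nat.le_add_right_of_le (Nat.mul_le_mul_right _ h1)
    · push_neg at hk
      have hzero : ∀ k, r i k ≤ r i j → x i k = 0 := fun k h => by
        have := hbin i k; have := hk k h; omega
      have hpref : ∀ k, x i k = 1 → r i j < r i k := by
        intro k hk1
        by_contra h
        have := hzero k (le_of_not_gt h)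
        omega
      unfold Stable at hst
      push_neg at hst
      have hst' := hst i j hij hpref
      have hfull : u j ≤ ∑ h, x h j := hst'.1
      have hscore : ∀ h, x h j = 1 → s i j ≤ s h j := hst'.2
      have hij0 : x i j = 0 := hzero j le_rfl
      have heq : ∑ h ∈ univ.filter (fun h => (h, j) ∈ E ∧ s i j < s h j), x h j
          = ∑ h, x h j := by
        apply Finset.sum_subset (Finset.filter_subset _ _)
        intro h _ hh
        simp only [Finset.mem_filter, Finset.mem_univ, true_and, not_and, not_lt] at hh
        by_contra hne
        have hh1 : x h j = 1 := by have := hbin h j; omega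
        have hhE : (h, j) ∈ E := hE h j hh1
        have hle : s h j ≤ s i j := hh hhE
        have hge : s i j ≤ s h j := hscore h hh1
        have : h = i := hsstrict j h i hhE hij (le_antisymm hle hge)
        rw [this] at hh1; omega
      calc u j ≤ ∑ h, x h j := hfull
      _ = _ := heq.symm
      _ ≤ _ := Nat.le_add_left _ _
  · rintro hcon ⟨i, j, hij, hpref, hblock⟩
    have h0 : ∑ k ∈ univ.filter (fun k => r i k ≤ r i j), x i k = 0 := by
      apply Finset.sum_eq_zero
      intro k hk
      simp only [Finset.mem_filter, Finset.mem_univ, true_and] at hk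
      by_contra hne
      have hk1 : x i k = 1 := by have := hbin i k; omega
      have := hpref k hk1
      omega
    have hcon' := hcon i j hij
    rw [h0, zero_mul, zero_add] at hcon'
    rcases hblock with hlt | ⟨h, hh1, hh2⟩
    · have : ∑ h ∈ univ.filter (fun h => (h, j) ∈ E ∧ s i j < s h j), x h j
          ≤ ∑ h, x h j :=
        Finset.sum_le_sum_of_subset (Finset.filter_subset _ _)
      omega
    · have hsub : univ.filter (fun h => (h, j) ∈ E ∧ s i j < s h j)
          ⊆ univ.erase h := by
        intro h' hh'
        simp only [Finset.mem_filter, Finset.mem_univ, true_and] at hh'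
        simp only [Finset.mem_erase, Finset.mem_univ, and_true]
        intro he; rw [he] at hh'; omega
      have h1 : ∑ h' ∈ univ.filter (fun h => (h, j) ∈ E ∧ s i j < s h j), x h' j
          ≤ ∑ h' ∈ univ.erase h, x h' j := Finset.sum_le_sum_of_subset hsub
      have h2 : x h j + ∑ h' ∈ univ.erase h, x h' j = ∑ h', x h' j :=
        Finset.add_sum_erase _ (fun h' => x h' j) (Finset.mem_univ h)
      have h3 := hquota j
      omega
end

section
/- In the College Admissions problem with ties, a set of score-limits (t_j) with induced matching x is H-stable if and only if there exist binary variables y_j for each college and d_{ij} for each application such that: (i) t_j ≤ (s̄+1)·y_j for all colleges; (ii) ∑_{k: r_{ik} ≥ r_{ij}} d_{ik} ≤ (1 − x_{ij})·m for all applications (a_i,c_j); (iii) t_j − 1 ≤ (1 − d_{ij})·s̄ + s_{ij} for all applications; and (iv) (u_j+1)(1 − y_j) + ∑_{i} (x_{ij} + d_{ij}) ≥ u_j + 1 for all colleges c_j, in addition to the feasibility constraints and the conditions that each applicant is matched to the first college on her list whose score-limit she meets. -/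
open Finset
open scoped Classical

open Finset

/-- Under score-limits `t`, applicant `i` is assigned to college `j`:
`j` is the best college on `i`'s list whose score-limit `i` achieves. -/
def Assigned {n m : ℕ} (E : Finset (Fin n × Fin m)) (r s : Fin n → Fin m → ℕ)
    (t : Fin m → ℕ) (i : Fin n) (j : Fin m) : Prop :=
  (i, j) ∈ E ∧ t j ≤ s i j ∧
    ∀ k, (i, k) ∈ E → t k ≤ s i k → r i j ≤ r i k

/-- The number of applicants assigned to college `j` under score-limits `t`. -/
noncomputable def numAssigned {n m : ℕ} (E : Finset (Fin n × Fin m))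
    (r s : Fin n → Fin m → ℕ) (t : Fin m → ℕ) (j : Fin m) : ℕ :=
  (Finset.univ.filter fun i => Assigned E r s t i j).card

/-- H-stability of a set of score-limits (Hungarian notion): the induced
matching violates no upper quota, and no college with a positive score-limit
could lower its score-limit by one (the other limits unchanged) without
violating its own quota. -/
noncomputable def HStable {n m : ℕ} (E : Finset (Fin n × Fin m))
    (r s : Fin n → Fin m → ℕ) (u : Fin m → ℕ) (t : Fin m → ℕ) : Prop :=
  (∀ j, numAssigned E r s t j ≤ u j) ∧
  (∀ j, 0 < t j →
    u j < numAssigned E r s (Function.update t j (t j - 1)) j)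


section AuxHStable

variable {n m : ℕ} (E : Finset (Fin n × Fin m)) (r s : Fin n → Fin m → ℕ)

lemma assigned_unique
    (hrstrict : ∀ i j k, (i, j) ∈ E → (i, k) ∈ E → r i j = r i k → j = k)
    (t0 : Fin m → ℕ) {i : Fin n} {j k : Fin m}
    (hj : Assigned E r s t0 i j) (hk : Assigned E r s t0 i k) : j = k := by
  obtain ⟨hjE, hjs, hjmin⟩ := hj
  obtain ⟨hkE, hks, hkmin⟩ := hk
  exact hrstrict i j k hjE hkE (le_antisymm (hjmin k hkE hks) (hkmin j hjE hjs))

lemma exists_assigned (t0 : Fin m → ℕ) {i : Fin n} {j : Fin m}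
    (hE : (i, j) ∈ E) (hsj : t0 j ≤ s i j) :
    ∃ k, Assigned E r s t0 i k ∧ r i k ≤ r i j := by
  obtain ⟨k, hk, hkmin⟩ := Finset.exists_min_image
    (univ.filter fun k => (i, k) ∈ E ∧ t0 k ≤ s i k) (r i)
    ⟨j, by simp [hE, hsj]⟩
  simp only [mem_filter, mem_univ, true_and] at hk
  refine ⟨k, ⟨hk.1, hk.2, fun k' hE' hs' => hkmin k' (by simp [hE', hs'])⟩,
    hkmin j (by simp [hE, hsj])⟩

lemma numAssigned_eq_sum (t0 : Fin m → ℕ) (j : Fin m) :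
    numAssigned E r s t0 j
      = ∑ i, (if Assigned E r s t0 i j then 1 else 0) := by
  classical
  rw [numAssigned, Finset.card_filter]

end AuxHStable

/-- In the College Admissions problem with ties, a set of
score-limits `t` with induced matching `x` is H-stable iff, in addition to
the feasibility constraints and the score-limit conditions (each applicant is
matched to the first college on her list whose score-limit she meets), there
exist binary variables `y j` and `d i j` satisfying
(i) `t j ≤ (s̄+1)·y j`, (ii) `∑_{k : r i k ≥ r i j} d i k ≤ (1 − x i j)·m`,
(iii) `t j − 1 ≤ (1 − d i j)·s̄ + s i j`, and
(iv) `(u j + 1)(1 − y j) + ∑_i (x i j + d i j) ≥ u j + 1`. -/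

theorem HStable_iff_IP {n m : ℕ} (E : Finset (Fin n × Fin m))
    (r s : Fin n → Fin m → ℕ) (u : Fin m → ℕ) (sbar : ℕ)
    (hs : ∀ i j, (i, j) ∈ E → s i j ≤ sbar)
    (hrstrict : ∀ i j k, (i, j) ∈ E → (i, k) ∈ E → r i j = r i k → j = k)
    (t : Fin m → ℕ) (ht : ∀ j, t j ≤ sbar + 1)
    (x : Fin n → Fin m → ℕ) (hbin : ∀ i j, x i j ≤ 1)
    (hx : ∀ i j, x i j = 1 ↔ Assigned E r s t i j) :
    HStable E r s u t ↔
      ((∀ i : Fin n, ∑ j, x i j ≤ 1) ∧ (∀ j : Fin m, ∑ i, x i j ≤ u j) ∧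
        (∀ i j, x i j = 1 → t j ≤ s i j) ∧
        (∀ i j, (i, j) ∈ E → (∀ k, r i k ≤ r i j → x i k = 0) → s i j < t j) ∧
        ∃ y : Fin m → ℕ, ∃ d : Fin n → Fin m → ℕ,
          (∀ j, y j ≤ 1) ∧ (∀ i j, d i j ≤ 1) ∧
          (∀ i j, d i j = 1 → (i, j) ∈ E) ∧
          (∀ j, t j ≤ (sbar + 1) * y j) ∧
          (∀ i j, (i, j) ∈ E →
            (∑ k ∈ univ.filter fun k => r i j ≤ r i k, d i k) ≤ (1 - x i j) * m) ∧
          (∀ i j, (i, j) ∈ E → t j - 1 ≤ (1 - d i j) * sbar + s i j) ∧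
          (∀ j, u j + 1 ≤
            (u j + 1) * (1 - y j) +
              ∑ i ∈ univ.filter fun i => (i, j) ∈ E, (x i j + d i j))) := by
  classical
  have hxval : ∀ i j, x i j = if Assigned E r s t i j then 1 else 0 := by
    intro i j
    by_cases h : Assigned E r s t i j
    · simp [h, (hx i j).mpr h]
    · have h1 : x i j ≠ 1 := fun e => h ((hx i j).mp e)
      have := hbin i j
      simp [h]; omega
  constructor
  · rintro ⟨hq, hlow⟩
    refine ⟨?_, ?_, ?_, ?_, ?_⟩
    · -- row sums
      intro i
      by_cases h : ∃ j0, Assigned E r s t i j0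
      · obtain ⟨j0, hj0⟩ := h
        have hv : ∀ j, x i j = if j = j0 then 1 else 0 := by
          intro j
          rw [hxval]
          by_cases hj : Assigned E r s t i j
          · have e := assigned_unique E r s hrstrict t hj hj0
            subst e; simp [hj0]
          · have hne : j ≠ j0 := fun e => hj (e ▸ hj0)
            simp [hj, hne]
        simp [hv]
      · push_neg at h
        simp [hxval, h]
    · -- column sums
      intro j
      have hsum : ∑ i, x i j = numAssigned E r s t j := by
        rw [numAssigned_eq_sum]
        exact Finset.sum_congr rfl fun i _ => hxval i j
      rw [hsum]; exact hq j
    · intro i j h1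
      exact ((hx i j).mp h1).2.1
    · intro i j hE hzero
      by_contra h
      push_neg at h
      obtain ⟨k, hk, hrk⟩ := exists_assigned E r s t hE h
      have h1 : x i k = 1 := (hx i k).mpr hk
      have h0 : x i k = 0 := hzero k hrk
      omega
    · refine ⟨fun j => if 0 < t j then 1 else 0,
        fun i j => if Assigned E r s (Function.update t j (t j - 1)) i j ∧ x i j = 0
          then 1 else 0, ?_, ?_, ?_, ?_, ?_, ?_, ?_⟩
      · intro j; dsimp only; split_ifs <;> omega
      · intro i j; dsimp only; split_ifs <;> omega
      · intro i j h
        dsimp only at h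
        split_ifs at h with hc
        · exact hc.1.1
      · intro j
        dsimp only
        split_ifs with h0
        · simpa using ht j
        · simp; omega
      · -- constraint (ii)
        intro i j hE
        dsimp only
        by_cases hx1 : x i j = 1
        · have hAj : Assigned E r s t i j := (hx i j).mp hx1
          have hz : ∀ k ∈ univ.filter (fun k => r i j ≤ r i k),
              (if Assigned E r s (Function.update t k (t k - 1)) i k ∧ x i k = 0
                then 1 else 0) = 0 := by
            intro k hk
            simp only [mem_filter, mem_univ, true_and] at hk
            rw [if_neg]
            rintro ⟨hA, hx0⟩
            have hne : j ≠ k := fun e => by rw [← e] at hx0; omega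
            have hjlim : Function.update t k (t k - 1) j ≤ s i j := by
              rw [Function.update_of_ne hne]; exact hAj.2.1
            have hkj : r i k ≤ r i j := hA.2.2 j hAj.1 hjlim
            exact hne (hrstrict i j k hAj.1 hA.1 (le_antisymm hk hkj))
          rw [Finset.sum_congr rfl hz]
          simp
        · have hx0 : x i j = 0 := by have := hbin i j; omega
          rw [hx0]
          calc (∑ k ∈ univ.filter fun k => r i j ≤ r i k,
                if Assigned E r s (Function.update t k (t k - 1)) i k ∧ x i k = 0
                  then 1 else 0)
              ≤ ∑ _k ∈ univ.filter (fun k => r i j ≤ r i k), 1 :=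
                Finset.sum_le_sum (fun k _ => by split_ifs <;> omega)
            _ = (univ.filter fun k => r i j ≤ r i k).card := by simp
            _ ≤ m := by
                simpa using Finset.card_filter_le univ (fun k => r i j ≤ r i k)
            _ = (1 - 0) * m := by ring
      · -- constraint (iii)
        intro i j hE
        dsimp only
        split_ifs with hc
        · have h2 := hc.1.2.1
          rw [Function.update_self] at h2
          simp
          omega
        · have := ht j
          have := hs i j hE
          simp; omega
      · -- constraint (iv)
        intro j
        dsimp only
        by_cases h0 : 0 < t j
        · rw [if_pos h0]
          have hlt := hlow j h0
          have hle : numAssigned E r s (Function.update t j (t j - 1)) j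
              ≤ ∑ i ∈ univ.filter (fun i => (i, j) ∈ E),
                  (x i j + if Assigned E r s (Function.update t j (t j - 1)) i j
                    ∧ x i j = 0 then 1 else 0) := by
            rw [numAssigned_eq_sum, Finset.sum_filter]
            apply Finset.sum_le_sum
            intro i _
            by_cases hA : Assigned E r s (Function.update t j (t j - 1)) i j
            · rw [if_pos hA, if_pos hA.1]
              by_cases hx1 : x i j = 1
              · omega
              · have hx0 : x i j = 0 := by have := hbin i j; omega
                rw [if_pos ⟨hA, hx0⟩]; omega
            · rw [if_neg hA]; omega
          omega
        · rw [if_neg h0]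
          simp
  · rintro ⟨hrow, hcol, hts, hslt, y, d, hy, hd, hdE, hiy, hii, hiii, hiv⟩
    constructor
    · intro j
      have hsum : ∑ i, x i j = numAssigned E r s t j := by
        rw [numAssigned_eq_sum]
        exact Finset.sum_congr rfl fun i _ => hxval i j
      rw [← hsum]; exact hcol j
    · intro j h0
      set t' := Function.update t j (t j - 1) with ht'def
      have hyj : y j = 1 := by
        rcases Nat.lt_or_ge (y j) 1 with h | h
        · have hy0 : y j = 0 := by omega
          have := hiy j
          rw [hy0] at this
          omega
        · have := hy j; omega
      have hdz : ∀ i, x i j = 1 → d i j = 0 := by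
        intro i hx1
        have h2 := hii i j ((hx i j).mp hx1).1
        rw [hx1] at h2
        simp only [Nat.sub_self, zero_mul, Nat.le_zero] at h2
        have := (Finset.sum_eq_zero_iff.mp h2) j (by simp)
        exact this
      have hB : ∀ i, x i j = 1 → Assigned E r s t' i j := by
        intro i hx1
        obtain ⟨hE, hsl, hmin⟩ := (hx i j).mp hx1
        refine ⟨hE, ?_, ?_⟩
        · rw [ht'def, Function.update_self]; omega
        · intro k hkE hks
          by_cases hkj : k = j
          · subst hkj; exact le_refl _
          · rw [ht'def, Function.update_of_ne hkj] at hks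
            exact hmin k hkE hks
      have hC : ∀ i, x i j = 0 → d i j = 1 → Assigned E r s t' i j := by
        intro i hx0 hd1
        have hE : (i, j) ∈ E := hdE i j hd1
        refine ⟨hE, ?_, ?_⟩
        · have := hiii i j hE
          rw [hd1] at this
          simp only [Nat.sub_self, zero_mul, zero_add] at this
          rw [ht'def, Function.update_self]; omega
        · intro k hkE hks
          by_cases hkj : k = j
          · subst hkj; exact le_refl _
          · rw [ht'def, Function.update_of_ne hkj] at hks
            by_contra hlt
            push_neg at hlt
            obtain ⟨k0, hk0, hrk0⟩ := exists_assigned E r s t hkE hks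
            have hxk0 : x i k0 = 1 := (hx i k0).mpr hk0
            have h2 := hii i k0 hk0.1
            rw [hxk0] at h2
            simp only [Nat.sub_self, zero_mul, Nat.le_zero] at h2
            by_cases hr : r i k0 ≤ r i j
            · have := (Finset.sum_eq_zero_iff.mp h2) j (by simp [hr])
              omega
            · push_neg at hr
              omega
      have hiv' := hiv j
      rw [hyj] at hiv'
      simp only [Nat.sub_self, mul_zero, zero_add] at hiv'
      have hle : ∑ i ∈ univ.filter (fun i => (i, j) ∈ E), (x i j + d i j)
          ≤ numAssigned E r s t' j := by
        rw [numAssigned_eq_sum, Finset.sum_filter]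
        apply Finset.sum_le_sum
        intro i _
        by_cases hE : (i, j) ∈ E
        · rw [if_pos hE]
          by_cases hx1 : x i j = 1
          · rw [if_pos (hB i hx1), hdz i hx1]; omega
          · have hx0 : x i j = 0 := by have := hbin i j; omega
            by_cases hd1 : d i j = 1
            · rw [if_pos (hC i hx0 hd1)]; omega
            · have : d i j = 0 := by have := hd i j; omega
              split_ifs <;> omega
        · rw [if_neg hE]
          exact Nat.zero_le _
      omega
end

section
/- In the College Admissions problem with lower quotas, a pair (x, o) where x_{ij} ∈ {0,1} indicates matches and o_j ∈ {0,1} indicates open colleges corresponds to a stable matching if and only if: (i) each applicant is matched to at most one college; (ii) o_j·l_j ≤ ∑_i x_{ij} ≤ o_j·u_j for each college; (iii) (∑_{k: r_{ik} ≤ r_{ij}} x_{ik})·u_j + ∑_{h: s_{hj} > s_{ij}} x_{hj} ≥ o_j·u_j for each application (a_i,c_j); and (iv) ∑_{i applying to c_j} [1 − ∑_{k: r_{ik} < r_{ij}} x_{ik}] ≤ (1−o_j)·(l_j −1) + o_j·n for each college c_j. -/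
open Finset
open scoped Classical

open Finset

/-- Stability for the College Admissions problem with lower quotas `l` and
upper quotas `u`, with `o j = 1` iff college `j` is open: the matching is
feasible (closed colleges empty, open colleges between their quotas), no
application blocks with an open college in the classical sense, and no
closed college has at least `l j` applicants who are unmatched or prefer it
to their assignment. -/
noncomputable def LQStable {n m : ℕ} (E : Finset (Fin n × Fin m))
    (r s : Fin n → Fin m → ℕ) (l u : Fin m → ℕ)
    (x : Fin n → Fin m → ℕ) (o : Fin m → ℕ) : Prop :=
  (∀ i j, x i j ≤ 1) ∧ (∀ j, o j ≤ 1) ∧ (∀ i j, x i j = 1 → (i, j) ∈ E) ∧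
  (∀ i : Fin n, ∑ j, x i j ≤ 1) ∧
  (∀ j, o j = 1 → l j ≤ ∑ i, x i j ∧ ∑ i, x i j ≤ u j) ∧
  (∀ j, o j = 0 → ∑ i, x i j = 0) ∧
  (¬ ∃ i j, (i, j) ∈ E ∧ o j = 1 ∧
    (∀ k, x i k = 1 → r i j < r i k) ∧
    ((∑ h, x h j) < u j ∨ ∃ h, x h j = 1 ∧ s h j < s i j)) ∧
  (∀ j, o j = 0 →
    (Finset.univ.filter fun i =>
      (i, j) ∈ E ∧ ∀ k, x i k = 1 → r i j < r i k).card < l j)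

/-!
Since `x` is binary and every applicant holds at most one place, a partial row sum
`∑_{k ∈ K} x i k` is the indicator that `i` is matched to a college in `K`. Hence the factor
`∑_{r i k ≤ r i j} x i k` of (iii) vanishes exactly when `i` is unmatched or prefers `j`, and
then (iii) at an open college says that `j` is full and admits only students scoring above `i`:
the application does not block. The summand of (iv) is the indicator that `i` is unmatched or
weakly prefers `j`. Nobody is matched to a closed college, so there strict ranks turn weak
preference into strict preference and (iv) bounds the number of applicants who would fill the
closed college by `l j - 1`; at an open college (iv) only says that at most `n` applicants apply.
-/

section BinarySums

variable {ι : Type*}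

lemma sum_filter_eq_zero_iff_of_le_one [Fintype ι] {f : ι → ℕ} (hf : ∀ k, f k ≤ 1)
    (p : ι → Prop) [DecidablePred p] :
    ∑ k ∈ univ.filter p, f k = 0 ↔ ∀ k, f k = 1 → ¬ p k := by
  simp only [sum_eq_zero_iff, mem_filter, mem_univ, true_and]
  refine forall_congr' fun k => ⟨fun h h1 hp => by simp [h hp] at h1, fun h hp => ?_⟩
  have := hf k
  by_contra h0
  exact h (by omega) hp

lemma sum_one_sub_eq_card_filter {s : Finset ι} {g : ι → ℕ} (hg : ∀ i ∈ s, g i ≤ 1) :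
    ∑ i ∈ s, (1 - g i) = #(s.filter fun i => g i = 0) := by
  rw [card_filter]
  refine sum_congr rfl fun i hi => ?_
  have := hg i hi
  split_ifs <;> omega

lemma quota_constraints_iff {o l u c : ι → ℕ} (ho : ∀ j, o j ≤ 1) :
    (∀ j, o j * l j ≤ c j ∧ c j ≤ o j * u j) ↔
      (∀ j, o j = 1 → l j ≤ c j ∧ c j ≤ u j) ∧ (∀ j, o j = 0 → c j = 0) := by
  rw [← forall_and]
  refine forall_congr' fun j => ?_
  rcases Nat.le_one_iff_eq_zero_or_eq_one.mp (ho j) with h | h <;> simp [h]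

end BinarySums

lemma forall_le_iff_forall_lt_of_injOn {α β : Type*} [PartialOrder β] {f : α → β} {A : Set α}
    {P : α → Prop} {a : α} (hf : Set.InjOn f A) (ha : a ∈ A) (hPA : ∀ b, P b → b ∈ A)
    (hPa : ¬ P a) :
    (∀ b, P b → f a ≤ f b) ↔ ∀ b, P b → f a < f b :=
  ⟨fun h b hb => (h b hb).lt_of_ne fun hab => hPa (hf ha (hPA b hb) hab ▸ hb),
    fun h b hb => (h b hb).le⟩

section Matching

variable {n m : ℕ} {E : Finset (Fin n × Fin m)} {r s : Fin n → Fin m → ℕ} {l u : Fin m → ℕ}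
  {x : Fin n → Fin m → ℕ} {o : Fin m → ℕ}

lemma sum_rank_le_eq_zero_iff (hxbin : ∀ i j, x i j ≤ 1) (i : Fin n) (j : Fin m) :
    ∑ k ∈ univ.filter (fun k => r i k ≤ r i j), x i k = 0 ↔ ∀ k, x i k = 1 → r i j < r i k := by
  simp only [sum_filter_eq_zero_iff_of_le_one (hxbin i), not_le]

lemma sum_rank_lt_eq_zero_iff (hxbin : ∀ i j, x i j ≤ 1) (hxE : ∀ i j, x i j = 1 → (i, j) ∈ E)
    (hrstrict : ∀ i j k, (i, j) ∈ E → (i, k) ∈ E → r i j = r i k → j = k)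
    {i : Fin n} {j : Fin m} (hij : (i, j) ∈ E) (hxij : x i j = 0) :
    ∑ k ∈ univ.filter (fun k => r i k < r i j), x i k = 0 ↔ ∀ k, x i k = 1 → r i j < r i k := by
  simp only [sum_filter_eq_zero_iff_of_le_one (hxbin i), not_lt]
  exact forall_le_iff_forall_lt_of_injOn (A := {k | (i, k) ∈ E})
    (fun j hj k hk => hrstrict i j k hj hk) hij (hxE i) (by omega)

lemma le_sum_higher_score_iff (hxbin : ∀ i j, x i j ≤ 1) (hxE : ∀ i j, x i j = 1 → (i, j) ∈ E)
    (hsstrict : ∀ j i i', (i, j) ∈ E → (i', j) ∈ E → s i j = s i' j → i = i')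
    {i : Fin n} {j : Fin m} (hij : (i, j) ∈ E) (hxij : x i j = 0) (hcap : ∑ h, x h j ≤ u j) :
    u j ≤ ∑ h ∈ univ.filter (fun h => (h, j) ∈ E ∧ s i j < s h j), x h j ↔
      u j ≤ ∑ h, x h j ∧ ∀ h, x h j = 1 → s i j ≤ s h j := by
  have hsplit := sum_filter_add_sum_filter_not univ
    (fun h => (h, j) ∈ E ∧ s i j < s h j) (fun h => x h j)
  have hrest : ∑ h ∈ univ.filter (fun h => ¬((h, j) ∈ E ∧ s i j < s h j)), x h j = 0 ↔
      ∀ h, x h j = 1 → s i j ≤ s h j := by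
    rw [sum_filter_eq_zero_iff_of_le_one (fun h => hxbin h j),
      forall_le_iff_forall_lt_of_injOn (A := {h | (h, j) ∈ E})
        (fun h hh h' hh' => hsstrict j h h' hh hh') hij (fun h => hxE h j) (by omega)]
    simp only [not_not]
    exact forall_congr' fun h => ⟨fun H hh => (H hh).2, fun H hh => ⟨hxE h j hh, H hh⟩⟩
  rw [← hrest]
  omega

lemma stability_constraint_iff (hxbin : ∀ i j, x i j ≤ 1) (hxE : ∀ i j, x i j = 1 → (i, j) ∈ E)
    (hsstrict : ∀ j i i', (i, j) ∈ E → (i', j) ∈ E → s i j = s i' j → i = i')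
    {i : Fin n} {j : Fin m} (hij : (i, j) ∈ E) (hrow : ∑ k, x i k ≤ 1) (hoj : o j ≤ 1)
    (hcap : o j = 1 → ∑ h, x h j ≤ u j) :
    o j * u j ≤ (∑ k ∈ univ.filter fun k => r i k ≤ r i j, x i k) * u j +
        ∑ h ∈ univ.filter fun h => (h, j) ∈ E ∧ s i j < s h j, x h j ↔
      (o j = 1 → (∀ k, x i k = 1 → r i j < r i k) →
        ¬ ((∑ h, x h j) < u j ∨ ∃ h, x h j = 1 ∧ s h j < s i j)) := by
  rcases Nat.le_one_iff_eq_zero_or_eq_one.mp hoj with hclosed | hopen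
  · simp [hclosed]
  have hS : ∑ k ∈ univ.filter (fun k => r i k ≤ r i j), x i k ≤ 1 :=
    (sum_le_sum_of_subset (filter_subset _ _)).trans hrow
  rcases Nat.le_one_iff_eq_zero_or_eq_one.mp hS with hS0 | hS1
  · have hcand := (sum_rank_le_eq_zero_iff hxbin i j).mp hS0
    have hxij : x i j = 0 := by
      by_contra h
      exact lt_irrefl _ (hcand j (by have := hxbin i j; omega))
    rw [hS0, hopen, zero_mul, zero_add, one_mul,
      le_sum_higher_score_iff hxbin hxE hsstrict hij hxij (hcap hopen)]
    simp only [true_implies, not_or, not_lt, not_exists, not_and]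
    exact (imp_iff_right hcand).symm
  · have hncand : ¬ ∀ k, x i k = 1 → r i j < r i k := by
      rw [← sum_rank_le_eq_zero_iff hxbin i j, hS1]
      exact one_ne_zero
    simp [hopen, hS1, hncand]

lemma coalition_constraint_iff {j : Fin m} (hl : 1 ≤ l j) (hxbin : ∀ i j, x i j ≤ 1)
    (hxE : ∀ i j, x i j = 1 → (i, j) ∈ E)
    (hrstrict : ∀ i j k, (i, j) ∈ E → (i, k) ∈ E → r i j = r i k → j = k)
    (hrow : ∀ i, ∑ k, x i k ≤ 1) (hoj : o j ≤ 1) (hclosed : o j = 0 → ∑ i, x i j = 0) :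
    (o j = 0 →
      (univ.filter fun i => (i, j) ∈ E ∧ ∀ k, x i k = 1 → r i j < r i k).card < l j) ↔
    (∑ i ∈ univ.filter fun i => (i, j) ∈ E,
        (1 - ∑ k ∈ univ.filter fun k => r i k < r i j, x i k)) ≤
      (1 - o j) * (l j - 1) + o j * n := by
  rw [sum_one_sub_eq_card_filter fun i _ =>
      (sum_le_sum_of_subset (filter_subset _ _)).trans (hrow i), filter_filter]
  rcases Nat.le_one_iff_eq_zero_or_eq_one.mp hoj with h | h
  · have hempty : ∀ i, x i j = 0 := fun i => sum_eq_zero_iff.mp (hclosed h) i (mem_univ i)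
    rw [filter_congr fun i _ => and_congr_right fun hij =>
      sum_rank_lt_eq_zero_iff hxbin hxE hrstrict hij (hempty i)]
    simp only [h, forall_const, Nat.sub_zero, one_mul, zero_mul, add_zero]
    omega
  · simpa [h] using card_le_univ (α := Fin n) _

end Matching

/-- A pair `(x, o)` of binary variables corresponds to a
stable matching of the College Admissions problem with lower quotas iff it
satisfies the IP constraints (1), (14), (15) and (16) of Biró–McBride. -/
theorem LQStable_iff_IP {n m : ℕ} (E : Finset (Fin n × Fin m))
    (r s : Fin n → Fin m → ℕ) (l u : Fin m → ℕ)
    (hl : ∀ j, 1 ≤ l j)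
    (hrstrict : ∀ i j k, (i, j) ∈ E → (i, k) ∈ E → r i j = r i k → j = k)
    (hsstrict : ∀ j i i', (i, j) ∈ E → (i', j) ∈ E → s i j = s i' j → i = i')
    (x : Fin n → Fin m → ℕ) (o : Fin m → ℕ)
    (hxbin : ∀ i j, x i j ≤ 1) (hobin : ∀ j, o j ≤ 1)
    (hxE : ∀ i j, x i j = 1 → (i, j) ∈ E) :
    LQStable E r s l u x o ↔
      ((∀ i : Fin n, ∑ j, x i j ≤ 1) ∧
        (∀ j, o j * l j ≤ ∑ i, x i j ∧ ∑ i, x i j ≤ o j * u j) ∧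
        (∀ i j, (i, j) ∈ E →
          o j * u j ≤ (∑ k ∈ univ.filter fun k => r i k ≤ r i j, x i k) * u j +
            ∑ h ∈ univ.filter fun h => (h, j) ∈ E ∧ s i j < s h j, x h j) ∧
        (∀ j, (∑ i ∈ univ.filter fun i => (i, j) ∈ E,
            (1 - ∑ k ∈ univ.filter fun k => r i k < r i j, x i k)) ≤
          (1 - o j) * (l j - 1) + o j * n)) := by
  rw [quota_constraints_iff hobin]
  simp only [LQStable, hxbin, hobin, implies_true, true_and, and_assoc]
  rw [and_iff_right hxE]
  refine and_congr_right fun hrow => and_congr_right fun hopen => and_congr_right fun hclosed =>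
    and_congr ?_ (forall_congr' fun j => ?_)
  · simp only [not_exists, not_and]
    exact forall₂_congr fun i j => forall_congr' fun hij =>
      (stability_constraint_iff hxbin hxE hsstrict hij (hrow i) (hobin j)
        fun h => (hopen j h).2).symm
  · exact coalition_constraint_iff (hl j) hxbin hxE hrstrict hrow (hobin j) (hclosed j)
end

section
/- Let I be a College Admissions instance (strict preferences, upper quotas only) and let I' be obtained from I by deleting one college. Then (a) every college present in both instances admits at least as many students in any stable matching of I' as in any stable matching of I, and (b) in the student-optimal stable matchings, every student is assigned to a college in I that she weakly prefers to her assignment in I' (where being unassigned is worst). -/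
open Finset

open Finset

/-- Applicant `i` weakly prefers her assignment under `x` to her assignment
under `x'` (being unassigned is worst, ranks: lower is better). -/
def WPrefers {n m : ℕ} (r : Fin n → Fin m → ℕ)
    (x x' : Fin n → Fin m → ℕ) (i : Fin n) : Prop :=
  ∀ j, x' i j = 1 → ∃ k, x i k = 1 ∧ r i k ≤ r i j

/-- `x` is the student-optimal stable matching of the instance with
application set `E`. -/
def StudentOptimal {n m : ℕ} (E : Finset (Fin n × Fin m))
    (r s : Fin n → Fin m → ℕ) (u : Fin m → ℕ) (x : Fin n → Fin m → ℕ) : Prop :=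
  Feasible E u x ∧ Stable E r s u x ∧
  ∀ x', Feasible E u x' → Stable E r s u x' → ∀ i, WPrefers r x x' i

lemma row_unique {m : ℕ} (f : Fin m → ℕ) (h : ∑ j, f j ≤ 1) {j k : Fin m}
    (hj : f j = 1) (hk : f k = 1) : j = k := by
  by_contra hne
  have h2 : ({j, k} : Finset (Fin m)).sum f ≤ ∑ t, f t :=
    Finset.sum_le_sum_of_subset (subset_univ _)
  rw [Finset.sum_pair hne] at h2
  omega

lemma col_card {n : ℕ} (g : Fin n → ℕ) (hb : ∀ i, g i ≤ 1) :
    ∑ i, g i = (univ.filter fun i => g i = 1).card := by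
  rw [Finset.card_filter]
  refine Finset.sum_congr rfl fun i _ => ?_
  have := hb i
  split <;> omega

/-- `i` is an "improver": matched by `x'` to a college strictly preferred to
every college she is matched to by `x` (in particular if `x` leaves her
unmatched). -/
def Imp {n m : ℕ} (r : Fin n → Fin m → ℕ) (x x' : Fin n → Fin m → ℕ)
    (i : Fin n) : Prop :=
  ∃ j, x' i j = 1 ∧ ∀ k, x i k = 1 → r i j < r i k

lemma core {n m : ℕ} (E : Finset (Fin n × Fin m))
    (r s : Fin n → Fin m → ℕ) (u : Fin m → ℕ) (j₀ : Fin m)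
    (hrstrict : ∀ i j k, (i, j) ∈ E → (i, k) ∈ E → r i j = r i k → j = k)
    (hsstrict : ∀ j i i', (i, j) ∈ E → (i', j) ∈ E → s i j = s i' j → i = i')
    (x x' : Fin n → Fin m → ℕ)
    (hxf : Feasible E u x) (hxs : Stable E r s u x)
    (hxf' : Feasible (E.filter fun e => e.2 ≠ j₀) u x')
    (hxs' : Stable (E.filter fun e => e.2 ≠ j₀) r s u x') :
    (∀ i, Imp r x x' i → ∀ j, x i j = 1 → ∃ i', Imp r x x' i' ∧ x' i' j = 1) ∧
    (∀ j, (∃ i', Imp r x x' i' ∧ x' i' j = 1) →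
      (∑ i, x i j = ∑ i, x' i j) ∧
      (∀ i, x i j = 1 → x' i j ≠ 1 → Imp r x x' i) ∧
      (∀ i, x' i j = 1 → x i j ≠ 1 → Imp r x x' i)) := by
  classical
  obtain ⟨hxb, hxE, hxrow, hxcol⟩ := hxf
  obtain ⟨hxb', hxE', hxrow', hxcol'⟩ := hxf'
  -- basic facts
  have hrowx : ∀ i (j k : Fin m), x i j = 1 → x i k = 1 → j = k :=
    fun i j k hj hk => row_unique (x i) (hxrow i) hj hk
  have hrowx' : ∀ i (j k : Fin m), x' i j = 1 → x' i k = 1 → j = k :=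
    fun i j k hj hk => row_unique (x' i) (hxrow' i) hj hk
  have hE'E : ∀ i j, x' i j = 1 → (i, j) ∈ E :=
    fun i j h => (Finset.mem_filter.1 (hxE' i j h)).1
  have hnotj₀ : ∀ i j, x' i j = 1 → j ≠ j₀ :=
    fun i j h => (Finset.mem_filter.1 (hxE' i j h)).2
  -- Step 1: stability of x against improvers
  have step1 : ∀ i, Imp r x x' i → ∀ j, x' i j = 1 →
      u j ≤ ∑ i', x i' j ∧ ∀ h, x h j = 1 → s i j < s h j := by
    intro i hi j hj
    obtain ⟨jw, hjw, hbetter⟩ := hi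
    have hjjw : j = jw := hrowx' i j jw hj hjw
    subst hjjw
    have hE : (i, j) ∈ E := hE'E i j hj
    constructor
    · by_contra hlt
      exact hxs ⟨i, j, hE, hbetter, Or.inl (lt_of_not_ge hlt)⟩
    · intro h hh
      have hle : ¬ s h j < s i j := fun hlt =>
        hxs ⟨i, j, hE, hbetter, Or.inr ⟨h, hh, hlt⟩⟩
      have hne : s i j ≠ s h j := by
        intro heq
        have : i = h := hsstrict j i h hE (hxE h j hh) heq
        subst this
        exact absurd (hbetter j hh) (lt_irrefl _)
      omega
  -- Step 2: for a college receiving an improver, every student it loses is an improver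
  have step2 : ∀ (j : Fin m) i₀, Imp r x x' i₀ → x' i₀ j = 1 →
      ∀ i', x i' j = 1 → x' i' j ≠ 1 → Imp r x x' i' := by
    intro j i₀ hi₀ hx'i₀ i' hxi' hnx'
    have hscore : s i₀ j < s i' j := (step1 i₀ hi₀ j hx'i₀).2 i' hxi'
    have hj₀ : j ≠ j₀ := hnotj₀ i₀ j hx'i₀
    have hE' : (i', j) ∈ E.filter fun e => e.2 ≠ j₀ :=
      Finset.mem_filter.2 ⟨hxE i' j hxi', hj₀⟩
    have hnp : ¬ ∀ k, x' i' k = 1 → r i' j < r i' k := fun hp =>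
      hxs' ⟨i', j, hE', hp, Or.inr ⟨i₀, hx'i₀, hscore⟩⟩
    push_neg at hnp
    obtain ⟨k, hk, hkle⟩ := hnp
    have hkj : k ≠ j := fun h => hnx' (h ▸ hk)
    have hklt : r i' k < r i' j := by
      rcases lt_or_eq_of_le hkle with h | h
      · exact h
      · exact absurd (hrstrict i' k j (hE'E i' k hk) (hxE i' j hxi') h) hkj
    exact ⟨k, hk, fun k' hk' => by
      have : k' = j := hrowx i' k' j hk' hxi'
      subst this; exact hklt⟩
  -- finsets
  set S : Finset (Fin n) := univ.filter (fun i => Imp r x x' i) with hS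
  set A : Fin m → Finset (Fin n) :=
    fun j => univ.filter (fun i => Imp r x x' i ∧ x' i j = 1) with hA
  set B : Fin m → Finset (Fin n) :=
    fun j => univ.filter (fun i => x i j = 1 ∧ ¬ x' i j = 1) with hB
  set Mc : Fin m → Finset (Fin n) :=
    fun j => univ.filter (fun i => x i j = 1) with hMc
  set Mc' : Fin m → Finset (Fin n) :=
    fun j => univ.filter (fun i => x' i j = 1) with hMc'
  set T : Finset (Fin m) :=
    univ.filter (fun j => ∃ i, Imp r x x' i ∧ x' i j = 1) with hT
  have hmemA : ∀ j i, i ∈ A j ↔ Imp r x x' i ∧ x' i j = 1 := by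
    intro j i; simp [hA]
  have hmemB : ∀ j i, i ∈ B j ↔ x i j = 1 ∧ ¬ x' i j = 1 := by
    intro j i; simp [hB]
  have hmemT : ∀ j, j ∈ T ↔ ∃ i, Imp r x x' i ∧ x' i j = 1 := by
    intro j; simp [hT]
  have hmemS : ∀ i, i ∈ S ↔ Imp r x x' i := by intro i; simp [hS]
  have hcardx : ∀ j, ∑ i, x i j = (Mc j).card :=
    fun j => col_card (fun i => x i j) (fun i => hxb i j)
  have hcardx' : ∀ j, ∑ i, x' i j = (Mc' j).card :=
    fun j => col_card (fun i => x' i j) (fun i => hxb' i j)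
  -- A j sits inside Mc' j \ Mc j
  have hAsub : ∀ j, A j ⊆ Mc' j \ Mc j := by
    intro j i hi
    rw [hmemA] at hi
    obtain ⟨himp, hx'⟩ := hi
    have hnx : ¬ x i j = 1 := by
      intro hx1
      obtain ⟨jw, hjw, hbetter⟩ := himp
      have : j = jw := hrowx' i j jw hx' hjw
      subst this
      exact absurd (hbetter j hx1) (lt_irrefl _)
    simp [hMc, hMc', Finset.mem_sdiff, hx', hnx]
  have hBeq : ∀ j, B j = Mc j \ Mc' j := by
    intro j; ext i; simp [hB, hMc, hMc', Finset.mem_sdiff]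
  -- for j ∈ T, j is full in x, so |A j| ≤ |B j|
  have hfull : ∀ j ∈ T, u j ≤ (Mc j).card := by
    intro j hj
    rw [hmemT] at hj
    obtain ⟨i, hi, hx'⟩ := hj
    have := (step1 i hi j hx').1
    rwa [hcardx j] at this
  have hMc'le : ∀ j, (Mc' j).card ≤ u j := by
    intro j
    have := hxcol' j
    rwa [hcardx' j] at this
  have hALeB : ∀ j ∈ T, (A j).card ≤ (B j).card := by
    intro j hj
    have h1 : (A j).card ≤ (Mc' j \ Mc j).card := Finset.card_le_card (hAsub j)
    have h2 : (Mc' j \ Mc j).card + (Mc' j ∩ Mc j).card = (Mc' j).card :=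
      Finset.card_sdiff_add_card_inter _ _
    have h3 : (Mc j \ Mc' j).card + (Mc j ∩ Mc' j).card = (Mc j).card :=
      Finset.card_sdiff_add_card_inter _ _
    have h4 : (Mc' j ∩ Mc j).card = (Mc j ∩ Mc' j).card := by
      rw [Finset.inter_comm]
    have h5 : (Mc' j).card ≤ (Mc j).card := le_trans (hMc'le j) (hfull j hj)
    rw [hBeq j]
    omega
  -- |S| = ∑_{j ∈ T} |A j|
  have hSbU : S = T.biUnion A := by
    ext i
    rw [hmemS, Finset.mem_biUnion]
    constructor
    · intro hi
      obtain ⟨jw, hjw, hbetter⟩ := hi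
      exact ⟨jw, (hmemT jw).2 ⟨i, ⟨jw, hjw, hbetter⟩, hjw⟩,
        (hmemA jw i).2 ⟨⟨jw, hjw, hbetter⟩, hjw⟩⟩
    · rintro ⟨j, _, hij⟩
      exact ((hmemA j i).1 hij).1
  have hAdisj : ∀ j ∈ T, ∀ k ∈ T, j ≠ k → Disjoint (A j) (A k) := by
    intro j _ k _ hjk
    rw [Finset.disjoint_left]
    intro i hij hik
    exact hjk (hrowx' i j k ((hmemA j i).1 hij).2 ((hmemA k i).1 hik).2)
  have hBdisj : ∀ j ∈ T, ∀ k ∈ T, j ≠ k → Disjoint (B j) (B k) := by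
    intro j _ k _ hjk
    rw [Finset.disjoint_left]
    intro i hij hik
    exact hjk (hrowx i j k ((hmemB j i).1 hij).1 ((hmemB k i).1 hik).1)
  have hScard : S.card = ∑ j ∈ T, (A j).card := by
    rw [hSbU, Finset.card_biUnion hAdisj]
  have hBU : T.biUnion B ⊆ S := by
    intro i hi
    rw [Finset.mem_biUnion] at hi
    obtain ⟨j, hjT, hij⟩ := hi
    obtain ⟨i₀, hi₀, hx'i₀⟩ := (hmemT j).1 hjT
    obtain ⟨hxi, hnx'⟩ := (hmemB j i).1 hij
    exact (hmemS i).2 (step2 j i₀ hi₀ hx'i₀ i hxi hnx')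
  have hBUcard : (T.biUnion B).card = ∑ j ∈ T, (B j).card :=
    Finset.card_biUnion hBdisj
  have hsumeq : ∑ j ∈ T, (B j).card = ∑ j ∈ T, (A j).card := by
    have h1 : ∑ j ∈ T, (B j).card ≤ S.card := by
      rw [← hBUcard]; exact Finset.card_le_card hBU
    have h2 : ∑ j ∈ T, (A j).card ≤ ∑ j ∈ T, (B j).card :=
      Finset.sum_le_sum hALeB
    omega
  -- termwise equality
  have htermwise : ∀ j ∈ T, (A j).card = (B j).card := by
    intro j hj
    by_contra hne
    have hlt : (A j).card < (B j).card := lt_of_le_of_ne (hALeB j hj) hne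
    have : ∑ j ∈ T, (A j).card < ∑ j ∈ T, (B j).card :=
      Finset.sum_lt_sum hALeB ⟨j, hj, hlt⟩
    omega
  have hSeq : T.biUnion B = S :=
    Finset.eq_of_subset_of_card_le hBU (by rw [hBUcard, hScard, hsumeq])
  constructor
  · -- E1
    intro i hi j hxij
    have hiS : i ∈ S := (hmemS i).2 hi
    rw [← hSeq, Finset.mem_biUnion] at hiS
    obtain ⟨j', hj'T, hij'⟩ := hiS
    have : j' = j := hrowx i j' j ((hmemB j' i).1 hij').1 hxij
    subst this
    exact (hmemT j').1 hj'T
  · -- E2, E3, E4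
    intro j hjmem
    have hjT : j ∈ T := (hmemT j).2 hjmem
    obtain ⟨i₀, hi₀, hx'i₀⟩ := hjmem
    -- card computations
    have h1 : (A j).card ≤ (Mc' j \ Mc j).card := Finset.card_le_card (hAsub j)
    have h2 : (Mc' j \ Mc j).card + (Mc' j ∩ Mc j).card = (Mc' j).card :=
      Finset.card_sdiff_add_card_inter _ _
    have h3 : (Mc j \ Mc' j).card + (Mc j ∩ Mc' j).card = (Mc j).card :=
      Finset.card_sdiff_add_card_inter _ _
    have h4 : (Mc' j ∩ Mc j).card = (Mc j ∩ Mc' j).card := by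
      rw [Finset.inter_comm]
    have h5 : (Mc' j).card ≤ (Mc j).card := le_trans (hMc'le j) (hfull j hjT)
    have h6 : (A j).card = (B j).card := htermwise j hjT
    have h7 : (B j).card = (Mc j \ Mc' j).card := by rw [hBeq j]
    have hMceq : (Mc j).card = (Mc' j).card := by omega
    refine ⟨by rw [hcardx j, hcardx' j, hMceq], fun i hxi hnx' => step2 j i₀ hi₀ hx'i₀ i hxi hnx', ?_⟩
    -- E4 : A j = Mc' j \ Mc j
    have hAeq : A j = Mc' j \ Mc j :=
      Finset.eq_of_subset_of_card_le (hAsub j) (by omega)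
    intro i hx'i hnxi
    have : i ∈ Mc' j \ Mc j := by
      simp [hMc, hMc', Finset.mem_sdiff, hx'i, hnxi]
    rw [← hAeq, hmemA] at this
    exact this.1

/-- Deleting one college `j₀` from a College Admissions
instance: (a) every remaining college admits at least as many students in any
stable matching of the reduced instance as in any stable matching of the
original one, and (b) in the student-optimal stable matchings every student
weakly prefers her assignment in the original instance. -/
theorem delete_college_compare {n m : ℕ} (E : Finset (Fin n × Fin m))
    (r s : Fin n → Fin m → ℕ) (u : Fin m → ℕ) (j₀ : Fin m)
    (hrstrict : ∀ i j k, (i, j) ∈ E → (i, k) ∈ E → r i j = r i k → j = k)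
    (hsstrict : ∀ j i i', (i, j) ∈ E → (i', j) ∈ E → s i j = s i' j → i = i') :
    (∀ x x', Feasible E u x → Stable E r s u x →
      Feasible (E.filter fun e => e.2 ≠ j₀) u x' →
      Stable (E.filter fun e => e.2 ≠ j₀) r s u x' →
      ∀ j, j ≠ j₀ → ∑ i, x i j ≤ ∑ i, x' i j) ∧
    (∀ x x', StudentOptimal E r s u x →
      StudentOptimal (E.filter fun e => e.2 ≠ j₀) r s u x' →
      ∀ i, WPrefers r x x' i) := by
  classical
  constructor
  · -- part (a)
    intro x x' hxf hxs hxf' hxs' j hj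
    by_contra hcon
    push_neg at hcon
    obtain ⟨hE1, hE2⟩ := core E r s u j₀ hrstrict hsstrict x x' hxf hxs hxf' hxs'
    -- find i1 matched to j by x but not x'
    have hex : ∃ i1, x i1 j = 1 ∧ ¬ x' i1 j = 1 := by
      by_contra hno
      push_neg at hno
      have : ∑ i, x i j ≤ ∑ i, x' i j := by
        refine Finset.sum_le_sum fun i _ => ?_
        have hb := hxf.1 i j
        have hb' := hxf'.1 i j
        by_cases h1 : x i j = 1
        · have := hno i h1; omega
        · omega
      omega
    obtain ⟨i1, hxi1, hnx'⟩ := hex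
    -- i1 is an improver
    have hE' : (i1, j) ∈ E.filter fun e => e.2 ≠ j₀ :=
      Finset.mem_filter.2 ⟨hxf.2.1 i1 j hxi1, hj⟩
    have hunder : ∑ h, x' h j < u j := lt_of_lt_of_le hcon (hxf.2.2.2 j)
    have hnp : ¬ ∀ k, x' i1 k = 1 → r i1 j < r i1 k := fun hp =>
      hxs' ⟨i1, j, hE', hp, Or.inl hunder⟩
    push_neg at hnp
    obtain ⟨k, hk, hkle⟩ := hnp
    have hkj : k ≠ j := fun h => hnx' (h ▸ hk)
    have hkE : (i1, k) ∈ E := (Finset.mem_filter.1 (hxf'.2.1 i1 k hk)).1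
    have hklt : r i1 k < r i1 j := by
      rcases lt_or_eq_of_le hkle with h | h
      · exact h
      · exact absurd (hrstrict i1 k j hkE (hxf.2.1 i1 j hxi1) h) hkj
    have himp : Imp r x x' i1 :=
      ⟨k, hk, fun k' hk' => by
        have : k' = j := row_unique (x i1) (hxf.2.2.1 i1) hk' hxi1
        subst this; exact hklt⟩
    have hjT := hE1 i1 himp j hxi1
    have := (hE2 j hjT).1
    omega
  · -- part (b)
    intro x x' hxopt hx'opt
    obtain ⟨hxf, hxs, hxoptimal⟩ := hxopt
    obtain ⟨hxf', hxs', _⟩ := hx'opt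
    obtain ⟨hE1, hE2⟩ := core E r s u j₀ hrstrict hsstrict x x' hxf hxs hxf' hxs'
    set z : Fin n → Fin m → ℕ :=
      fun i j => if Imp r x x' i then x' i j else x i j with hzdef
    have hzi : ∀ i j, Imp r x x' i → z i j = x' i j := fun i j h => if_pos h
    have hzn : ∀ i j, ¬ Imp r x x' i → z i j = x i j := fun i j h => if_neg h
    -- column dichotomy: each column of z is a column of x' (colleges in T) or of x
    have hz : ∀ j, ((∃ i', Imp r x x' i' ∧ x' i' j = 1) ∧ ∀ i, z i j = x' i j)
        ∨ (∀ i, z i j = x i j) := by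
      intro j
      by_cases hT : ∃ i', Imp r x x' i' ∧ x' i' j = 1
      · left
        refine ⟨hT, fun i => ?_⟩
        by_cases hi : Imp r x x' i
        · exact hzi i j hi
        · rw [hzn i j hi]
          have hb := hxf.1 i j
          have hb' := hxf'.1 i j
          by_cases h1 : x i j = 1
          · by_cases h2 : x' i j = 1
            · omega
            · exact absurd ((hE2 j hT).2.1 i h1 h2) hi
          · by_cases h2 : x' i j = 1
            · exact absurd ((hE2 j hT).2.2 i h2 h1) hi
            · omega
      · right
        intro i
        by_cases hi : Imp r x x' i
        · rw [hzi i j hi]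
          have hb := hxf.1 i j
          have hb' := hxf'.1 i j
          by_cases h1 : x i j = 1
          · exact absurd (hE1 i hi j h1) hT
          · by_cases h2 : x' i j = 1
            · exact absurd ⟨i, hi, h2⟩ hT
            · omega
        · exact hzn i j hi
    -- z is feasible for the full instance
    have hzfeas : Feasible E u z := by
      refine ⟨fun i j => ?_, fun i j hzij => ?_, fun i => ?_, fun j => ?_⟩
      · by_cases hi : Imp r x x' i
        · rw [hzi i j hi]; exact hxf'.1 i j
        · rw [hzn i j hi]; exact hxf.1 i j
      · by_cases hi : Imp r x x' i
        · rw [hzi i j hi] at hzij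
          exact (Finset.mem_filter.1 (hxf'.2.1 i j hzij)).1
        · rw [hzn i j hi] at hzij
          exact hxf.2.1 i j hzij
      · by_cases hi : Imp r x x' i
        · rw [Finset.sum_congr rfl fun j _ => hzi i j hi]
          exact hxf'.2.2.1 i
        · rw [Finset.sum_congr rfl fun j _ => hzn i j hi]
          exact hxf.2.2.1 i
      · rcases hz j with ⟨_, hcol⟩ | hcol
        · rw [Finset.sum_congr rfl fun i _ => hcol i]
          exact hxf'.2.2.2 j
        · rw [Finset.sum_congr rfl fun i _ => hcol i]
          exact hxf.2.2.2 j
    -- z is stable for the full instance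
    have hzstab : Stable E r s u z := by
      rintro ⟨i, j, hijE, hpref, hblock⟩
      rcases hz j with ⟨hjT, hcol⟩ | hcol
      · -- column of x'
        obtain ⟨iw, hiw, hx'iw⟩ := hjT
        have hj₀ : j ≠ j₀ := (Finset.mem_filter.1 (hxf'.2.1 iw j hx'iw)).2
        have hE' : (i, j) ∈ E.filter fun e => e.2 ≠ j₀ :=
          Finset.mem_filter.2 ⟨hijE, hj₀⟩
        have hblock' : (∑ h, x' h j) < u j ∨ ∃ h, x' h j = 1 ∧ s h j < s i j := by
          rcases hblock with h | ⟨h, hh, hs⟩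
          · left; rwa [Finset.sum_congr rfl fun i' _ => hcol i'] at h
          · exact Or.inr ⟨h, by rw [← hcol h]; exact hh, hs⟩
        by_cases hi : Imp r x x' i
        · obtain ⟨k, hk, hbetter⟩ := hi
          have hzk : z i k = 1 := by
            rw [hzi i k ⟨k, hk, hbetter⟩]; exact hk
          have hrjk : r i j < r i k := hpref k hzk
          refine hxs' ⟨i, j, hE', fun k' hk' => ?_, hblock'⟩
          have : k' = k := row_unique (x' i) (hxf'.2.2.1 i) hk' hk
          subst this
          exact hrjk
        · refine hxs' ⟨i, j, hE', fun k' hk' => ?_, hblock'⟩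
          have hni := hi
          unfold Imp at hni
          push_neg at hni
          obtain ⟨km, hkm, hge⟩ := hni k' hk'
          have hzkm : z i km = 1 := by rw [hzn i km hi]; exact hkm
          have := hpref km hzkm
          omega
      · -- column of x
        have hblock' : (∑ h, x h j) < u j ∨ ∃ h, x h j = 1 ∧ s h j < s i j := by
          rcases hblock with h | ⟨h, hh, hs⟩
          · left; rwa [Finset.sum_congr rfl fun i' _ => hcol i'] at h
          · exact Or.inr ⟨h, by rw [← hcol h]; exact hh, hs⟩
        by_cases hi : Imp r x x' i
        · obtain ⟨k, hk, hbetter⟩ := hi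
          have hzk : z i k = 1 := by
            rw [hzi i k ⟨k, hk, hbetter⟩]; exact hk
          have hrjk : r i j < r i k := hpref k hzk
          exact hxs ⟨i, j, hijE,
            fun k' hk' => lt_trans hrjk (hbetter k' hk'), hblock'⟩
        · exact hxs ⟨i, j, hijE,
            fun k' hk' => hpref k' (by rw [hzn i k' hi]; exact hk'), hblock'⟩
    -- by student-optimality of x, nobody improves
    have hwp := hxoptimal z hzfeas hzstab
    have hnoimp : ∀ i', ¬ Imp r x x' i' := by
      intro i' hi'
      obtain ⟨k, hk, hbetter⟩ := hi'
      have hzk : z i' k = 1 := by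
        rw [hzi i' k ⟨k, hk, hbetter⟩]; exact hk
      obtain ⟨k', hk', hle⟩ := hwp i' k hzk
      exact absurd hle (not_le.2 (hbetter k' hk'))
    intro i j hj
    have hni := hnoimp i
    unfold Imp at hni
    push_neg at hni
    obtain ⟨k, hk, hge⟩ := hni j hj
    exact ⟨k, hk, hge⟩
end

section
/- In the College Admissions problem with lower quotas, let X be the set of colleges that do not reach their lower quotas in the stable matchings of the instance with all lower quotas ignored. For a college c_j ∈ X, if c_j still does not reach its lower quota in the stable matchings of the instance where all colleges of X except c_j are closed (deleted), then c_j must be closed in every stable matching respecting the lower quotas. -/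
/-!
Let `(x, o)` be stable with lower quotas and suppose `j₀` is open. Its closed colleges `C` lie in
`X`, hence in `X \ {j₀}`. The matching `x` is stable in the instance `E_C` with `C` closed, so by
the rural hospitals theorem `j₀` receives in the student-optimal matching of `E_C` as many
students as in `x`, at least `l j₀`. Closing the remaining colleges of `X \ {j₀}` can only raise
the demand for `j₀`: the student-optimal matching of `E_C` is weakly preferred by every student
to any stable matching of `E_{X \ {j₀}}`, so a student it sends to `j₀` who is elsewhere in the
latter would block there unless `j₀` is full. Hence `j₀` receives at least `l j₀` students in the
stable matchings of `E_{X \ {j₀}}`, contradicting the hypothesis.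

Stable matchings are obtained as the least fixed point of the cutoff operator of deferred
acceptance, which makes the optimality statements comparisons of cutoff vectors.
-/

open Finset
open scoped Classical

open Finset

variable {n m : ℕ}

def StrictRanks (E : Finset (Fin n × Fin m)) (r : Fin n → Fin m → ℕ) : Prop :=
  ∀ i j k, (i, j) ∈ E → (i, k) ∈ E → r i j = r i k → j = k

def StrictScores (E : Finset (Fin n × Fin m)) (s : Fin n → Fin m → ℕ) : Prop :=
  ∀ j i i', (i, j) ∈ E → (i', j) ∈ E → s i j = s i' j → i = i'

lemma StrictRanks.mono {E E' : Finset (Fin n × Fin m)} {r : Fin n → Fin m → ℕ}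
    (h : StrictRanks E r) (hE : E' ⊆ E) : StrictRanks E' r :=
  fun i j k hj hk => h i j k (hE hj) (hE hk)

lemma StrictScores.mono {E E' : Finset (Fin n × Fin m)} {s : Fin n → Fin m → ℕ}
    (h : StrictScores E s) (hE : E' ⊆ E) : StrictScores E' s :=
  fun j i i' hi hi' => h j i i' (hE hi) (hE hi')

def closeColleges (E : Finset (Fin n × Fin m)) (D : Finset (Fin m)) : Finset (Fin n × Fin m) :=
  E.filter fun e => e.2 ∉ D

section closeColleges

variable {E : Finset (Fin n × Fin m)} {C D : Finset (Fin m)}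

@[simp]
lemma mem_closeColleges {i : Fin n} {j : Fin m} :
    (i, j) ∈ closeColleges E D ↔ (i, j) ∈ E ∧ j ∉ D :=
  mem_filter

lemma closeColleges_subset : closeColleges E D ⊆ E :=
  filter_subset _ _

@[simp]
lemma closeColleges_empty : closeColleges E ∅ = E :=
  filter_true_of_mem fun _ _ => notMem_empty _

lemma closeColleges_closeColleges (h : C ⊆ D) :
    closeColleges (closeColleges E C) D = closeColleges E D := by
  ext ⟨i, j⟩
  simp only [mem_closeColleges]
  exact ⟨fun hj => ⟨hj.1.1, hj.2⟩, fun hj => ⟨⟨hj.1, fun hC => hj.2 (h hC)⟩, hj.2⟩⟩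

end closeColleges

lemma sum_eq_card_filter_of_le_one {N : ℕ} {g : Fin N → ℕ} (hg : ∀ i, g i ≤ 1) :
    ∑ i, g i = #(univ.filter fun i => g i = 1) := by
  rw [card_filter]
  refine sum_congr rfl fun i _ => ?_
  have := hg i
  interval_cases g i <;> simp

section Feasible

variable {E : Finset (Fin n × Fin m)} {u : Fin m → ℕ} {x : Fin n → Fin m → ℕ}

lemma Feasible.eq_zero_of_ne_one (h : Feasible E u x) {i : Fin n} {j : Fin m}
    (hij : x i j ≠ 1) : x i j = 0 := by
  have := h.1 i j
  omega

lemma Feasible.eq_of_eq_one (h : Feasible E u x) {i : Fin n} {j k : Fin m}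
    (hj : x i j = 1) (hk : x i k = 1) : j = k := by
  by_contra hjk
  have hpair : x i j + x i k ≤ ∑ j', x i j' :=
    (sum_pair hjk).symm.trans_le (sum_le_sum_of_subset (subset_univ _))
  have := h.2.2.1 i
  omega

end Feasible

def Dominates (r : Fin n → Fin m → ℕ) (w y : Fin n → Fin m → ℕ) : Prop :=
  ∀ i k, y i k = 1 → ∃ j, w i j = 1 ∧ r i j ≤ r i k

section Dominates

variable {E E' : Finset (Fin n × Fin m)} {r s : Fin n → Fin m → ℕ} {u : Fin m → ℕ}
  {w y : Fin n → Fin m → ℕ}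

lemma Dominates.rank_lt (hdom : Dominates r w y) (hr : StrictRanks E r) (hw : Feasible E u w)
    (hyE : ∀ i k, y i k = 1 → (i, k) ∈ E) {i : Fin n} {j k : Fin m}
    (hij : w i j = 1) (hik : y i k = 1) (hjk : j ≠ k) : r i j < r i k := by
  obtain ⟨j', hj', hle⟩ := hdom i k hik
  obtain rfl := hw.eq_of_eq_one hj' hij
  exact hle.lt_of_ne fun h => hjk (hr i j' k (hw.2.1 i j' hij) (hyE i k hik) h)

/-- A student sent to `j` by `w` but not by `y` would block `y` at `j`, unless `j` is full. -/
lemma Dominates.sum_le (hdom : Dominates r w y) (hr : StrictRanks E r) (hw : Feasible E u w)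
    (hy : Feasible E' u y) (hyS : Stable E' r s u y) (hE' : E' ⊆ E) {j : Fin m}
    (hj : ∀ i, w i j = 1 → (i, j) ∈ E') : ∑ i, w i j ≤ ∑ i, y i j := by
  by_cases hfull : u j ≤ ∑ i, y i j
  · exact (hw.2.2.2 j).trans hfull
  rw [sum_eq_card_filter_of_le_one (hw.1 · j), sum_eq_card_filter_of_le_one (hy.1 · j)]
  refine card_le_card fun i hi => ?_
  simp only [mem_filter, mem_univ, true_and] at hi ⊢
  by_contra hyi
  have hpref : ∀ k, y i k = 1 → r i j < r i k := fun k hk =>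
    hdom.rank_lt hr hw (fun i k h => hE' (hy.2.1 i k h)) hi hk (by rintro rfl; exact hyi hk)
  exact hyS ⟨i, j, hj i hi, hpref, Or.inl (not_le.1 hfull)⟩

/-- Rural hospitals: `w` fills no college more than `y` but matches at least as many students. -/
lemma Dominates.sum_eq (hdom : Dominates r w y) (hr : StrictRanks E r) (hw : Feasible E u w)
    (hy : Feasible E u y) (hyS : Stable E r s u y) (j : Fin m) :
    ∑ i, y i j = ∑ i, w i j := by
  have hcol : ∀ j, ∑ i, w i j ≤ ∑ i, y i j := fun j =>
    hdom.sum_le hr hw hy hyS subset_rfl fun i h => hw.2.1 i j h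
  have hrow : ∀ i, ∑ k, y i k ≤ ∑ k, w i k := fun i => by
    by_cases h : ∃ k, y i k = 1
    · obtain ⟨k, hk⟩ := h
      obtain ⟨j, hj, -⟩ := hdom i k hk
      calc ∑ k, y i k ≤ 1 := hy.2.2.1 i
        _ = w i j := hj.symm
        _ ≤ ∑ k, w i k := single_le_sum (fun _ _ => Nat.zero_le _) (mem_univ j)
    · push Not at h
      simp [fun k => hy.eq_zero_of_ne_one (h k)]
  have htotal : ∑ j, ∑ i, w i j = ∑ j, ∑ i, y i j := by
    refine le_antisymm (sum_le_sum fun j _ => hcol j) ?_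
    rw [sum_comm, sum_comm (f := fun j i => w i j)]
    exact sum_le_sum fun i _ => hrow i
  exact ((sum_eq_sum_iff_of_le fun j _ => hcol j).1 htotal j (mem_univ j)).symm

end Dominates

section Cutoffs

/-! A cutoff vector `P` makes college `k` affordable for student `i` iff `P k ≤ s i k`; the
cutoff `⊤` makes `k` unaffordable to everybody. -/

variable (E : Finset (Fin n × Fin m)) (r s : Fin n → Fin m → ℕ) (u : Fin m → ℕ)

def demanders (P : Fin m → ℕ∞) (j : Fin m) : Finset (Fin n) :=
  univ.filter fun i => (i, j) ∈ E ∧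
    ∀ k, k ≠ j → (i, k) ∈ E → P k ≤ s i k → r i j < r i k

def demandAbove (P : Fin m → ℕ∞) (j : Fin m) (c : ℕ∞) : ℕ :=
  #((demanders E r s P j).filter fun i => c ≤ s i j)

/-- The deferred acceptance operator. -/
noncomputable def cutoffUpdate (P : Fin m → ℕ∞) (j : Fin m) : ℕ∞ :=
  sInf {c | demandAbove E r s P j c ≤ u j}

lemma demanders_mono {P P' : Fin m → ℕ∞} (h : P ≤ P') (j : Fin m) :
    demanders E r s P j ⊆ demanders E r s P' j :=
  fun i hi => by
    simp only [demanders, mem_filter, mem_univ, true_and] at hi ⊢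
    exact ⟨hi.1, fun k hk hkE hks => hi.2 k hk hkE ((h k).trans hks)⟩

noncomputable def cutoffMap : (Fin m → ℕ∞) →o (Fin m → ℕ∞) where
  toFun := cutoffUpdate E r s u
  monotone' _ _ h j := sInf_le_sInf fun _ hc =>
    (card_le_card (filter_subset_filter _ (demanders_mono E r s h j))).trans hc

noncomputable def optimalCutoffs : Fin m → ℕ∞ :=
  OrderHom.lfp (cutoffMap E r s u)

def assignment (P : Fin m → ℕ∞) : Fin n → Fin m → ℕ :=
  fun i j => if i ∈ demanders E r s P j ∧ P j ≤ s i j then 1 else 0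

noncomputable def optimalMatching : Fin n → Fin m → ℕ :=
  assignment E r s (optimalCutoffs E r s u)

variable {E r s u}

lemma mem_demanders {P : Fin m → ℕ∞} {i : Fin n} {j : Fin m} :
    i ∈ demanders E r s P j ↔
      (i, j) ∈ E ∧ ∀ k, k ≠ j → (i, k) ∈ E → P k ≤ s i k → r i j < r i k := by
  simp [demanders]

lemma demandAbove_cutoffUpdate_le (P : Fin m → ℕ∞) (j : Fin m) :
    demandAbove E r s P j (cutoffUpdate E r s u P j) ≤ u j :=
  csInf_mem (s := {c | demandAbove E r s P j c ≤ u j}) ⟨⊤, by simp [demandAbove]⟩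

lemma lt_demandAbove_of_lt_cutoffUpdate {P : Fin m → ℕ∞} {j : Fin m} {c : ℕ∞}
    (hc : c < cutoffUpdate E r s u P j) : u j < demandAbove E r s P j c :=
  not_le.1 fun h => (sInf_le (α := ℕ∞) h).not_gt hc

lemma cutoffUpdate_ne_top (P : Fin m → ℕ∞) (j : Fin m) : cutoffUpdate E r s u P j ≠ ⊤ := by
  refine ne_top_of_le_ne_top (ENat.natCast_ne_top (univ.sup fun i => s i j + 1)) (sInf_le ?_)
  suffices ∀ i, ¬ ((univ.sup fun i => s i j + 1 : ℕ) : ℕ∞) ≤ s i j by simp [demandAbove, this]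
  intro i
  rw [Nat.cast_le, not_le]
  exact Nat.lt_of_succ_le (le_sup (f := fun i => s i j + 1) (mem_univ i))

/-- With strict scores the demand drops by at most one from one cutoff to the next, so a
positive cutoff fills the college exactly. -/
lemma demandAbove_cutoffUpdate_eq (hs : StrictScores E s) (P : Fin m → ℕ∞) {j : Fin m}
    (h0 : cutoffUpdate E r s u P j ≠ 0) :
    demandAbove E r s P j (cutoffUpdate E r s u P j) = u j := by
  obtain ⟨c, hc⟩ :=
    ENat.ne_top_iff_exists.1 (cutoffUpdate_ne_top P j : cutoffUpdate E r s u P j ≠ ⊤)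
  obtain ⟨p, rfl⟩ : ∃ p, c = p + 1 :=
    Nat.exists_eq_add_one.2 (Nat.pos_of_ne_zero (by rintro rfl; exact h0 hc.symm))
  have hle : demandAbove E r s P j (cutoffUpdate E r s u P j) ≤ u j :=
    demandAbove_cutoffUpdate_le P j
  rw [← hc] at hle ⊢
  have hlt : u j < demandAbove E r s P j p :=
    lt_demandAbove_of_lt_cutoffUpdate (by rw [← hc]; exact_mod_cast p.lt_succ_self)
  have hstep : demandAbove E r s P j p ≤ demandAbove E r s P j ↑(p + 1) + 1 := by
    set A := demanders E r s P j
    have hsplit : A.filter (fun i => (p : ℕ∞) ≤ s i j) ⊆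
        A.filter (fun i => ((p + 1 : ℕ) : ℕ∞) ≤ s i j) ∪ A.filter (fun i => s i j = p) := by
      intro i hi
      simp only [mem_filter, mem_union, Nat.cast_le] at hi ⊢
      obtain ⟨hiA, hpi⟩ := hi
      exact hpi.lt_or_eq.imp (fun h => ⟨hiA, h⟩) fun h => ⟨hiA, h.symm⟩
    have hone : #(A.filter fun i => s i j = p) ≤ 1 := card_le_one.2 fun a ha b hb => by
      simp only [mem_filter, A, mem_demanders] at ha hb
      exact hs j a b ha.1.1 hb.1.1 (ha.2.trans hb.2.symm)
    exact (card_le_card hsplit).trans ((card_union_le _ _).trans (Nat.add_le_add_left hone _))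
  omega

lemma assignment_eq_one {P : Fin m → ℕ∞} {i : Fin n} {j : Fin m} :
    assignment E r s P i j = 1 ↔ i ∈ demanders E r s P j ∧ P j ≤ s i j := by
  unfold assignment
  split_ifs <;> simp_all

lemma assignment_le_one (P : Fin m → ℕ∞) (i : Fin n) (j : Fin m) :
    assignment E r s P i j ≤ 1 := by
  unfold assignment
  split_ifs <;> simp

lemma sum_assignment (P : Fin m → ℕ∞) (j : Fin m) :
    ∑ i, assignment E r s P i j = demandAbove E r s P j (P j) := by
  rw [sum_eq_card_filter_of_le_one (assignment_le_one P · j), demandAbove]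
  congr 1
  ext i
  simp [assignment_eq_one]

lemma exists_assignment_le (hr : StrictRanks E r) (P : Fin m → ℕ∞) {i : Fin n} {k : Fin m}
    (hk : (i, k) ∈ E) (hP : P k ≤ s i k) :
    ∃ j, assignment E r s P i j = 1 ∧ r i j ≤ r i k := by
  set B := univ.filter fun j => (i, j) ∈ E ∧ P j ≤ s i j
  have hkB : k ∈ B := by simp [B, hk, hP]
  obtain ⟨j, hjB, hmin⟩ := exists_min_image B (r i) ⟨k, hkB⟩
  simp only [B, mem_filter, mem_univ, true_and] at hjB hmin
  refine ⟨j, assignment_eq_one.2 ⟨mem_demanders.2 ⟨hjB.1, fun k' hk' hk'E hk'P => ?_⟩, hjB.2⟩,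
    hmin k ⟨hk, hP⟩⟩
  exact (hmin k' ⟨hk'E, hk'P⟩).lt_of_ne fun h => hk' (hr i j k' hjB.1 hk'E h).symm

lemma feasible_assignment {P : Fin m → ℕ∞} (hP : cutoffUpdate E r s u P = P) :
    Feasible E u (assignment E r s P) := by
  refine ⟨assignment_le_one P, fun i j h => (mem_demanders.1 (assignment_eq_one.1 h).1).1,
    fun i => ?_, fun j => ?_⟩
  · rw [sum_eq_card_filter_of_le_one (assignment_le_one P i)]
    refine card_le_one.2 fun j hj k hk => by_contra fun hjk => ?_
    simp only [mem_filter, mem_univ, true_and, assignment_eq_one, mem_demanders] at hj hk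
    have := hj.1.2 k (Ne.symm hjk) hk.1.1 hk.2
    have := hk.1.2 j hjk hj.1.1 hj.2
    omega
  · have hfit : demandAbove E r s P j (cutoffUpdate E r s u P j) ≤ u j :=
      demandAbove_cutoffUpdate_le P j
    rwa [hP, ← sum_assignment] at hfit

lemma stable_assignment (hr : StrictRanks E r) (hs : StrictScores E s) {P : Fin m → ℕ∞}
    (hP : cutoffUpdate E r s u P = P) : Stable E r s u (assignment E r s P) := by
  rintro ⟨i, j, hij, hpref, hblock⟩
  have hiD : i ∈ demanders E r s P j := mem_demanders.2 ⟨hij, fun k _ hk hPk => by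
    obtain ⟨j', hj', hle⟩ := exists_assignment_le hr P hk hPk
    exact (hpref j' hj').trans_le hle⟩
  have hunaff : (s i j : ℕ∞) < P j := not_le.1 fun hPj =>
    (hpref j (assignment_eq_one.2 ⟨hiD, hPj⟩)).false
  rcases hblock with hnotfull | ⟨h, hh, hlt⟩
  · have hfull := demandAbove_cutoffUpdate_eq (r := r) (u := u) hs P (j := j)
      (by rw [hP]; exact (zero_le.trans_lt hunaff).ne')
    rw [hP, ← sum_assignment] at hfull
    omega
  · have hhi : s i j < s h j := by exact_mod_cast (assignment_eq_one.1 hh).2.trans_lt' hunaff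
    exact lt_asymm hlt hhi

lemma cutoffUpdate_optimalCutoffs :
    cutoffUpdate E r s u (optimalCutoffs E r s u) = optimalCutoffs E r s u :=
  OrderHom.map_lfp (cutoffMap E r s u)

lemma feasible_optimalMatching : Feasible E u (optimalMatching E r s u) :=
  feasible_assignment cutoffUpdate_optimalCutoffs

lemma stable_optimalMatching (hr : StrictRanks E r) (hs : StrictScores E s) :
    Stable E r s u (optimalMatching E r s u) :=
  stable_assignment hr hs cutoffUpdate_optimalCutoffs

variable (s u) in
noncomputable def stableCutoffs (y : Fin n → Fin m → ℕ) (j : Fin m) : ℕ∞ :=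
  if ∑ i, y i j < u j then 0 else (univ.filter fun i => y i j = 1).inf fun i => (s i j : ℕ∞)

lemma stableCutoffs_le {y : Fin n → Fin m → ℕ} {i : Fin n} {j : Fin m} (h : y i j = 1) :
    stableCutoffs s u y j ≤ s i j := by
  unfold stableCutoffs
  split_ifs
  · exact zero_le
  · exact inf_le (by simpa using h)

lemma cutoffUpdate_stableCutoffs_le (hs : StrictScores E s) {y : Fin n → Fin m → ℕ}
    (hy : Feasible E u y) (hyS : Stable E r s u y) :
    cutoffUpdate E r s u (stableCutoffs s u y) ≤ stableCutoffs s u y := by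
  intro j
  set Q := stableCutoffs s u y
  refine sInf_le (le_trans (card_le_card fun i hi => ?_)
    ((sum_eq_card_filter_of_le_one (hy.1 · j)).symm.trans_le (hy.2.2.2 j)) :
      demandAbove E r s Q j (Q j) ≤ u j)
  simp only [mem_filter, mem_univ, true_and, mem_demanders] at hi ⊢
  obtain ⟨⟨hij, hbest⟩, hiQ⟩ := hi
  by_contra hyi
  have hpref : ∀ k, y i k = 1 → r i j < r i k := fun k hk =>
    hbest k (by rintro rfl; exact hyi hk) (hy.2.1 i k hk) (stableCutoffs_le hk)
  have hnoblock : u j ≤ ∑ h, y h j ∧ ∀ h, y h j = 1 → s i j ≤ s h j := by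
    simpa [Stable, not_or, not_lt] using fun h => hyS ⟨i, j, hij, hpref, h⟩
  rw [show Q j = _ from if_neg (not_lt.2 hnoblock.1),
    Finset.inf_le_iff (ENat.natCast_lt_top _)] at hiQ
  obtain ⟨h, hh, hle⟩ := hiQ
  rw [mem_filter] at hh
  obtain rfl : i = h := hs j i h hij (hy.2.1 h j hh.2)
    (le_antisymm (hnoblock.2 h hh.2) (by exact_mod_cast hle))
  exact hyi hh.2

/-- Closing the colleges of `D` amounts to raising their cutoffs to `⊤`. -/
def closeCutoffs (D : Finset (Fin m)) (Q : Fin m → ℕ∞) (j : Fin m) : ℕ∞ :=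
  if j ∈ D then ⊤ else Q j

lemma demanders_closeCutoffs {D : Finset (Fin m)} {Q : Fin m → ℕ∞} {j : Fin m} (hj : j ∉ D) :
    demanders E r s (closeCutoffs D Q) j = demanders (closeColleges E D) r s Q j := by
  ext i
  simp only [mem_demanders, mem_closeColleges, closeCutoffs, hj, not_false_eq_true, and_true]
  refine and_congr_right fun _ => forall_congr' fun k => forall_congr' fun hk => ?_
  by_cases hkD : k ∈ D <;> simp [hkD]

lemma cutoffUpdate_closeCutoffs_le {D : Finset (Fin m)} {Q : Fin m → ℕ∞}
    (hQ : cutoffUpdate (closeColleges E D) r s u Q ≤ Q) :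
    cutoffUpdate E r s u (closeCutoffs D Q) ≤ closeCutoffs D Q := by
  intro j
  by_cases hj : j ∈ D
  · simp [closeCutoffs, hj]
  · simpa only [cutoffUpdate, demandAbove, demanders_closeCutoffs hj, closeCutoffs, hj,
      if_false] using hQ j

/-- Student optimality, also against the stable matchings of instances with colleges closed. -/
theorem optimalMatching_dominates (hr : StrictRanks E r) (hs : StrictScores E s)
    {D : Finset (Fin m)} {y : Fin n → Fin m → ℕ} (hy : Feasible (closeColleges E D) u y)
    (hyS : Stable (closeColleges E D) r s u y) : Dominates r (optimalMatching E r s u) y := by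
  have hle : optimalCutoffs E r s u ≤ closeCutoffs D (stableCutoffs s u y) :=
    OrderHom.lfp_le _ (cutoffUpdate_closeCutoffs_le
      (cutoffUpdate_stableCutoffs_le (hs.mono closeColleges_subset) hy hyS))
  intro i k hk
  obtain ⟨hkE, hkD⟩ := mem_closeColleges.1 (hy.2.1 i k hk)
  refine exists_assignment_le hr _ hkE ((hle k).trans ?_)
  simpa [closeCutoffs, hkD] using stableCutoffs_le hk

theorem sum_eq_sum_optimalMatching (hr : StrictRanks E r) (hs : StrictScores E s)
    {y : Fin n → Fin m → ℕ} (hy : Feasible E u y) (hyS : Stable E r s u y) (j : Fin m) :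
    ∑ i, y i j = ∑ i, optimalMatching E r s u i j :=
  (optimalMatching_dominates hr hs (D := ∅) (by rwa [closeColleges_empty])
    (by rwa [closeColleges_empty])).sum_eq hr feasible_optimalMatching hy hyS j

theorem sum_optimalMatching_le_of_closeColleges (hr : StrictRanks E r) (hs : StrictScores E s)
    {D : Finset (Fin m)} {y : Fin n → Fin m → ℕ} (hy : Feasible (closeColleges E D) u y)
    (hyS : Stable (closeColleges E D) r s u y) {j : Fin m} (hj : j ∉ D) :
    ∑ i, optimalMatching E r s u i j ≤ ∑ i, y i j :=
  (optimalMatching_dominates hr hs hy hyS).sum_le hr feasible_optimalMatching hy hyS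
    closeColleges_subset fun i hi => mem_closeColleges.2 ⟨feasible_optimalMatching.2.1 i j hi, hj⟩

end Cutoffs

section LowerQuotas

variable {E : Finset (Fin n × Fin m)} {r s : Fin n → Fin m → ℕ} {l u : Fin m → ℕ}
  {x : Fin n → Fin m → ℕ} {o : Fin m → ℕ}

lemma LQStable.ne_zero_of_eq_one (h : LQStable E r s l u x o) {i : Fin n} {j : Fin m}
    (hij : x i j = 1) : o j ≠ 0 := fun hj => by
  have := h.2.2.2.2.2.1 j hj
  have := single_le_sum (f := fun i => x i j) (fun _ _ => Nat.zero_le _) (mem_univ i)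
  simp_all

lemma LQStable.feasible (h : LQStable E r s l u x o) :
    Feasible (closeColleges E (univ.filter fun j => o j = 0)) u x := by
  refine ⟨h.1, fun i j hij => ?_, h.2.2.2.1, fun j => ?_⟩
  · simpa using ⟨h.2.2.1 i j hij, h.ne_zero_of_eq_one hij⟩
  · rcases Nat.le_one_iff_eq_zero_or_eq_one.1 (h.2.1 j) with hj | hj
    · simp [h.2.2.2.2.2.1 j hj]
    · exact (h.2.2.2.2.1 j hj).2

lemma LQStable.stable (h : LQStable E r s l u x o) :
    Stable (closeColleges E (univ.filter fun j => o j = 0)) r s u x := by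
  rintro ⟨i, j, hij, hpref, hblock⟩
  obtain ⟨hijE, hj⟩ := mem_closeColleges.1 hij
  have hopen : o j = 1 := by
    have := h.2.1 j
    simp only [mem_filter, mem_univ, true_and] at hj
    omega
  exact h.2.2.2.2.2.2.1 ⟨i, j, hijE, hopen, hpref, hblock⟩

/-- By rural hospitals it suffices to check the student-optimal matching, whose students at `j`
all prefer `j` to their college in `x`. -/
lemma LQStable.sum_lt_of_eq_zero (h : LQStable E r s l u x o) (hr : StrictRanks E r)
    (hs : StrictScores E s) {j : Fin m} (hj : o j = 0) {y : Fin n → Fin m → ℕ}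
    (hy : Feasible E u y) (hyS : Stable E r s u y) : ∑ i, y i j < l j := by
  have hw : Feasible E u (optimalMatching E r s u) := feasible_optimalMatching
  have hdom := optimalMatching_dominates hr hs h.feasible h.stable
  rw [sum_eq_sum_optimalMatching hr hs hy hyS, sum_eq_card_filter_of_le_one (hw.1 · j)]
  refine (card_le_card fun i hi => ?_).trans_lt (h.2.2.2.2.2.2.2 j hj)
  simp only [mem_filter, mem_univ, true_and] at hi ⊢
  refine ⟨hw.2.1 i j hi, fun k hk => hdom.rank_lt hr hw
    (fun i k hk => closeColleges_subset (h.feasible.2.1 i k hk)) hi hk ?_⟩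
  rintro rfl
  exact h.ne_zero_of_eq_one hk hj

end LowerQuotas

theorem still_unfilled_must_close_general {n m : ℕ} (E : Finset (Fin n × Fin m))
    (r s : Fin n → Fin m → ℕ) (l u : Fin m → ℕ)
    (hrstrict : ∀ i j k, (i, j) ∈ E → (i, k) ∈ E → r i j = r i k → j = k)
    (hsstrict : ∀ j i i', (i, j) ∈ E → (i', j) ∈ E → s i j = s i' j → i = i')
    (X : Finset (Fin m))
    (hX : ∀ j, j ∈ X ↔
      ∀ x₀, Feasible E u x₀ → Stable E r s u x₀ → ∑ i, x₀ i j < l j)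
    (j₀ : Fin m)
    (hstill : ∀ x₁,
      Feasible (E.filter fun e => e.2 ∉ X.erase j₀) u x₁ →
      Stable (E.filter fun e => e.2 ∉ X.erase j₀) r s u x₁ →
      ∑ i, x₁ i j₀ < l j₀) :
    ∀ x o, LQStable E r s l u x o → o j₀ = 0 := by
  intro x o hx
  by_contra hopen
  set C := univ.filter fun j => o j = 0
  set D := X.erase j₀
  have hCD : C ⊆ D := fun j hj => by
    rw [mem_filter] at hj
    exact mem_erase.2 ⟨by rintro rfl; exact hopen hj.2,
      (hX j).2 fun _ => hx.sum_lt_of_eq_zero hrstrict hsstrict hj.2⟩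
  have hrC : StrictRanks (closeColleges E C) r := StrictRanks.mono hrstrict closeColleges_subset
  have hsC : StrictScores (closeColleges E C) s := StrictScores.mono hsstrict closeColleges_subset
  have hrD : StrictRanks (closeColleges E D) r := StrictRanks.mono hrstrict closeColleges_subset
  have hsD : StrictScores (closeColleges E D) s := StrictScores.mono hsstrict closeColleges_subset
  set y := optimalMatching (closeColleges E D) r s u
  have hy : Feasible (closeColleges E D) u y := feasible_optimalMatching
  have hyS : Stable (closeColleges E D) r s u y := stable_optimalMatching hrD hsD
  have hfill : l j₀ ≤ ∑ i, x i j₀ := (hx.2.2.2.2.1 j₀ (by have := hx.2.1 j₀; omega)).1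
  rw [sum_eq_sum_optimalMatching hrC hsC hx.feasible hx.stable] at hfill
  have hmono : ∑ i, optimalMatching (closeColleges E C) r s u i j₀ ≤ ∑ i, y i j₀ :=
    sum_optimalMatching_le_of_closeColleges hrC hsC (by rwa [closeColleges_closeColleges hCD])
      (by rwa [closeColleges_closeColleges hCD]) (notMem_erase j₀ X)
  have hmiss : ∑ i, y i j₀ < l j₀ := hstill y hy hyS
  omega

/-- Let `X` be the set of colleges that do not reach their
lower quotas in the stable matchings of the instance with all lower quotas
ignored. If a college `j₀ ∈ X` still does not reach its lower quota in the
stable matchings of the instance in which all colleges of `X` except `j₀`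
are closed (deleted), then `j₀` is closed in every stable matching
respecting the lower quotas. -/
theorem still_unfilled_must_close {n m : ℕ} (E : Finset (Fin n × Fin m))
    (r s : Fin n → Fin m → ℕ) (l u : Fin m → ℕ)
    (hrstrict : ∀ i j k, (i, j) ∈ E → (i, k) ∈ E → r i j = r i k → j = k)
    (hsstrict : ∀ j i i', (i, j) ∈ E → (i', j) ∈ E → s i j = s i' j → i = i')
    (X : Finset (Fin m))
    (hX : ∀ j, j ∈ X ↔
      ∀ x₀, Feasible E u x₀ → Stable E r s u x₀ → ∑ i, x₀ i j < l j)
    (j₀ : Fin m) (hj₀ : j₀ ∈ X)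
    (hstill : ∀ x₁,
      Feasible (E.filter fun e => e.2 ∉ X.erase j₀) u x₁ →
      Stable (E.filter fun e => e.2 ∉ X.erase j₀) r s u x₁ →
      ∑ i, x₁ i j₀ < l j₀) :
    ∀ x o, LQStable E r s l u x o → o j₀ = 0 :=
  still_unfilled_must_close_general E r s l u hrstrict hsstrict X hX j₀ hstill
end

section
/- In the College Admissions problem with common quotas and strict preferences, a matching x together with score-limits t_p for each quota-set C_p is stable if and only if it satisfies: feasibility (each applicant matched at most once, each college quota u_j respected, each common quota u_p respected); for each application (a_i, c_j) and each C_p containing c_j, x_{ij} = 1 implies s_{ij} ≥ t_p; there exist binary variables y_i^p such that s_{ij} + 1 ≤ t_p + (∑_{k: r_{ik} ≤ r_{ij}} x_{ik} + y_i^p)·(s̄+1) for each application and each C_p ∋ c_j, with ∑_{p: c_j ∈ C_p} y_i^p ≤ q_j − 1 for each application (a_i, c_j), where q_j is the number of quota-sets containing c_j (including {c_j} itself); and t_p = 0 whenever fewer than u_p students are admitted in total to colleges of C_p. -/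
open Finset
open scoped Classical

/-- Number of students admitted by `x` to colleges of the quota-set `Cs p`. -/
def countIn {n m q : ℕ} (Cs : Fin q → Finset (Fin m))
    (x : Fin n → Fin m → ℕ) (p : Fin q) : ℕ :=
  ∑ i, ∑ j ∈ Cs p, x i j

/-- Number of students admitted by `x` to colleges of `Cs p` with score
strictly greater than `σ`. -/
def countHigher {n m q : ℕ} (Cs : Fin q → Finset (Fin m))
    (s : Fin n → Fin m → ℕ) (x : Fin n → Fin m → ℕ) (p : Fin q) (σ : ℕ) : ℕ :=
  ∑ i, ∑ j ∈ (Cs p).filter fun j => σ < s i j, x i j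

/-- Feasibility for the College Admissions problem with common quotas: a
feasible matching additionally respecting each common quota `uq p` over the
quota-set `Cs p`. -/
def FeasibleCQ {n m q : ℕ} (E : Finset (Fin n × Fin m)) (u : Fin m → ℕ)
    (Cs : Fin q → Finset (Fin m)) (uq : Fin q → ℕ)
    (x : Fin n → Fin m → ℕ) : Prop :=
  (∀ i j, x i j ≤ 1) ∧ (∀ i j, x i j = 1 → (i, j) ∈ E) ∧
  (∀ i : Fin n, ∑ j, x i j ≤ 1) ∧ (∀ j : Fin m, ∑ i, x i j ≤ u j) ∧
  (∀ p, countIn Cs x p ≤ uq p)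

/-- Stability with common quotas: every applicant not admitted to a college
`j` on her list, nor to any college she prefers, is blocked by some
quota-set containing `j` all of whose places are filled by strictly
higher-scoring applicants. -/
def StableCQ {n m q : ℕ} (E : Finset (Fin n × Fin m))
    (r s : Fin n → Fin m → ℕ) (Cs : Fin q → Finset (Fin m)) (uq : Fin q → ℕ)
    (x : Fin n → Fin m → ℕ) : Prop :=
  ∀ i j, (i, j) ∈ E → (∀ k, x i k = 1 → r i j < r i k) →
    ∃ p, j ∈ Cs p ∧ uq p ≤ countHigher Cs s x p (s i j)

lemma sum_le_card_sub_one' {α : Type*} [DecidableEq α] (S : Finset α) (f : α → ℕ)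
    (hf : ∀ a ∈ S, f a ≤ 1) {p : α} (hp : p ∈ S) (h0 : f p = 0) :
    ∑ a ∈ S, f a ≤ S.card - 1 := by
  rw [← Finset.sum_erase S h0]
  calc ∑ a ∈ S.erase p, f a ≤ ∑ _a ∈ S.erase p, 1 :=
        Finset.sum_le_sum (fun a ha => hf a (Finset.mem_of_mem_erase ha))
    _ = (S.erase p).card := by simp
    _ = S.card - 1 := Finset.card_erase_of_mem hp

lemma exists_zero_of_sum_le' {α : Type*} (S : Finset α) (f : α → ℕ)
    (hf : ∀ a, f a ≤ 1) (hne : S.Nonempty) (h : ∑ a ∈ S, f a ≤ S.card - 1) :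
    ∃ a ∈ S, f a = 0 := by
  by_contra hc
  push_neg at hc
  have hall : ∀ a ∈ S, f a = 1 := fun a ha =>
    le_antisymm (hf a) (Nat.one_le_iff_ne_zero.2 (hc a ha))
  rw [Finset.sum_congr rfl hall] at h
  simp only [Finset.sum_const, smul_eq_mul, mul_one] at h
  have := Finset.card_pos.2 hne
  omega

/-- In the College Admissions problem with common quotas and
strict preferences, a matching `x` together with score-limits `t p` for the
quota-sets is stable iff it satisfies the IP constraints (1), (2), (17),
(18), (19), (20), (21), (22) of Biró–McBride. -/
theorem commonQuotas_stable_iff_IP {n m q : ℕ} (E : Finset (Fin n × Fin m))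
    (r s : Fin n → Fin m → ℕ) (u : Fin m → ℕ) (sbar : ℕ)
    (Cs : Fin q → Finset (Fin m)) (uq : Fin q → ℕ)
    (hs : ∀ i j, (i, j) ∈ E → s i j ≤ sbar)
    (hsingle : ∀ j, ∃ p, Cs p = {j} ∧ uq p = u j)
    (hsame : ∀ p j k i, j ∈ Cs p → k ∈ Cs p → (i, j) ∈ E → (i, k) ∈ E →
      s i j = s i k)
    (hrstrict : ∀ i j k, (i, j) ∈ E → (i, k) ∈ E → r i j = r i k → j = k)
    (hsstrict : ∀ p j k i i', i ≠ i' → j ∈ Cs p → k ∈ Cs p →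
      (i, j) ∈ E → (i', k) ∈ E → s i j ≠ s i' k)
    (x : Fin n → Fin m → ℕ) (t : Fin q → ℕ) (ht : ∀ p, t p ≤ sbar + 1) :
    (FeasibleCQ E u Cs uq x ∧ StableCQ E r s Cs uq x ∧
      (∀ i j p, x i j = 1 → j ∈ Cs p → t p ≤ s i j) ∧
      (∀ i j, (i, j) ∈ E → (∀ k, x i k = 1 → r i j < r i k) →
        ∃ p, j ∈ Cs p ∧ s i j < t p) ∧
      (∀ p, countIn Cs x p < uq p → t p = 0)) ↔
    (FeasibleCQ E u Cs uq x ∧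
      (∀ i j p, x i j = 1 → j ∈ Cs p → t p ≤ s i j) ∧
      (∃ y : Fin n → Fin q → ℕ, (∀ i p, y i p ≤ 1) ∧
        (∀ i j p, (i, j) ∈ E → j ∈ Cs p →
          s i j + 1 ≤ t p +
            ((∑ k ∈ univ.filter fun k => r i k ≤ r i j, x i k) + y i p) *
              (sbar + 1)) ∧
        (∀ i j, (i, j) ∈ E →
          ∑ p ∈ univ.filter (fun p => j ∈ Cs p), y i p ≤
            (univ.filter fun p => j ∈ Cs p).card - 1)) ∧
      (∀ p, countIn Cs x p < uq p → t p = 0)) := by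
  classical
  constructor
  · rintro ⟨hF, _hS, h17, h4, h22⟩
    refine ⟨hF, h17, ?_, h22⟩
    refine ⟨fun i p => if ∃ j ∈ Cs p, (i, j) ∈ E ∧
        (∑ k ∈ univ.filter fun k => r i k ≤ r i j, x i k) = 0 ∧ t p ≤ s i j
        then 1 else 0, fun i p => by dsimp only; split <;> simp, ?_, ?_⟩
    · intro i j p hij hjp
      dsimp only
      by_cases hX : (∑ k ∈ univ.filter fun k => r i k ≤ r i j, x i k) = 0
      · by_cases hts : t p ≤ s i j
        · rw [if_pos ⟨j, hjp, hij, hX, hts⟩, hX]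
          have := hs i j hij
          nlinarith
        · have h1 : s i j + 1 ≤ t p := by omega
          exact le_trans h1 (Nat.le_add_right _ _)
      · have h1 : 1 ≤ (∑ k ∈ univ.filter fun k => r i k ≤ r i j, x i k) +
            (if ∃ j ∈ Cs p, (i, j) ∈ E ∧
              (∑ k ∈ univ.filter fun k => r i k ≤ r i j, x i k) = 0 ∧ t p ≤ s i j
              then 1 else 0) := by
          have := Nat.one_le_iff_ne_zero.2 hX
          omega
        have h2 : sbar + 1 ≤ ((∑ k ∈ univ.filter fun k => r i k ≤ r i j, x i k) +
            (if ∃ j ∈ Cs p, (i, j) ∈ E ∧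
              (∑ k ∈ univ.filter fun k => r i k ≤ r i j, x i k) = 0 ∧ t p ≤ s i j
              then 1 else 0)) * (sbar + 1) :=
          Nat.le_mul_of_pos_left _ h1
        have := hs i j hij
        omega
    · intro i j hij
      -- find p₀ with j ∈ Cs p₀ and y i p₀ = 0
      obtain ⟨p₀, hp₀, hy0⟩ : ∃ p₀, j ∈ Cs p₀ ∧
          ¬ ∃ j' ∈ Cs p₀, (i, j') ∈ E ∧
            (∑ k ∈ univ.filter fun k => r i k ≤ r i j', x i k) = 0 ∧ t p₀ ≤ s i j' := by
        by_cases hX : (∑ k ∈ univ.filter fun k => r i k ≤ r i j, x i k) = 0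
        · have hbetter : ∀ k, x i k = 1 → r i j < r i k := by
            intro k hk
            by_contra hle
            push_neg at hle
            have hkmem : k ∈ univ.filter fun k => r i k ≤ r i j := by
              simp [hle]
            have := (Finset.sum_eq_zero_iff.1 hX) k hkmem
            omega
          obtain ⟨p, hp, hlt⟩ := h4 i j hij hbetter
          refine ⟨p, hp, ?_⟩
          rintro ⟨j', hj', hij', _, hts⟩
          have := hsame p j' j i hj' hp hij' hij
          omega
        · obtain ⟨p, hCp, _⟩ := hsingle j
          refine ⟨p, by simp [hCp], ?_⟩
          rintro ⟨j', hj', _, hX', _⟩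
          rw [hCp, Finset.mem_singleton] at hj'
          subst hj'
          exact hX hX'
      have hPmem : p₀ ∈ univ.filter fun p => j ∈ Cs p := by simp [hp₀]
      refine sum_le_card_sub_one' _ _ (fun a _ => by dsimp only; split <;> simp)
        hPmem ?_
      dsimp only
      rw [if_neg hy0]
  · rintro ⟨hF, h17, ⟨y, hy1, h18, h19⟩, h22⟩
    have h4 : ∀ i j, (i, j) ∈ E → (∀ k, x i k = 1 → r i j < r i k) →
        ∃ p, j ∈ Cs p ∧ s i j < t p := by
      intro i j hij hbetter
      have hX : (∑ k ∈ univ.filter fun k => r i k ≤ r i j, x i k) = 0 := by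
        refine Finset.sum_eq_zero fun k hk => ?_
        rw [Finset.mem_filter] at hk
        by_contra hne
        have hx1 : x i k = 1 := by have := hF.1 i k; omega
        have := hbetter k hx1
        omega
      have hne : (univ.filter fun p => j ∈ Cs p).Nonempty := by
        obtain ⟨p, hCp, _⟩ := hsingle j
        exact ⟨p, by simp [hCp]⟩
      obtain ⟨p₀, hp₀mem, hy0⟩ :=
        exists_zero_of_sum_le' _ (fun p => y i p) (fun p => hy1 i p) hne (h19 i j hij)
      rw [Finset.mem_filter] at hp₀mem
      refine ⟨p₀, hp₀mem.2, ?_⟩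
      have := h18 i j p₀ hij hp₀mem.2
      rw [hX, hy0] at this
      omega
    refine ⟨hF, ?_, h17, h4, h22⟩
    intro i j hij hbetter
    obtain ⟨p, hp, hlt⟩ := h4 i j hij hbetter
    refine ⟨p, hp, ?_⟩
    have htp : 0 < t p := by omega
    have hcnt : uq p ≤ countIn Cs x p := by
      by_contra hc
      push_neg at hc
      have := h22 p hc
      omega
    refine le_trans hcnt ?_
    unfold countIn countHigher
    refine Finset.sum_le_sum fun i' _ => ?_
    refine le_of_eq (Finset.sum_subset (Finset.filter_subset _ _) ?_).symm
    intro j' hj' hnj'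
    by_contra hne
    have hx1 : x i' j' = 1 := by have := hF.1 i' j'; omega
    have hts := h17 i' j' p hx1 hj'
    exact hnj' (Finset.mem_filter.2 ⟨hj', lt_of_lt_of_le hlt hts⟩)
end

section
/- In the College Admissions problem with common quotas, if the family of quota-sets is nested (any two quota-sets are disjoint or one contains the other) and preferences are strict, then a stable matching always exists. -/
open Finset
open scoped Classical

/-!
Run the applicant-proposing cumulative-offer process, the colleges choosing greedily: go through
the offers in order of decreasing score (ties broken by the applicants' preferences) and accept an
offer unless some quota containing its college is already full. For a laminar family of quotas
this choice is substitutable: adding an offer `f` to the pool changes nothing, adds `f`, or trades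
`f` for an offer `g` with which it shares a full quota. Hence rejected offers stay rejected, and
the process ends with every applicant holding at most her latest offer. Each offer she made to a
college she prefers was rejected by a quota full of offers of higher priority, and since scores
are distinct within a quota, these offers score strictly higher.
-/

section LaminarGreedy

variable {α ι : Type*} [DecidableEq α] (S : ι → Finset α) (cap : ι → ℕ)

def IsLaminar : Prop :=
  ∀ p p', (S p ∩ S p').Nonempty → S p ⊆ S p' ∨ S p' ⊆ S p

def Fits (X : Finset α) (a : α) : Prop :=
  ∀ p, a ∈ S p → #(X ∩ S p) < cap p

noncomputable def addIfFits (X : Finset α) (a : α) : Finset α :=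
  if Fits S cap X a then insert a X else X

/-- The greedy choice from `A`, offers being considered from the end of the list to its head. -/
noncomputable def greedy (A : Finset α) : List α → Finset α
  | [] => ∅
  | a :: l => if a ∈ A then addIfFits S cap (greedy A l) a else greedy A l

variable {S cap}

theorem Fits.mono {X Y : Finset α} {a : α} (hY : Fits S cap Y a) (hXY : X ⊆ Y) :
    Fits S cap X a :=
  fun p hp => (card_le_card (inter_subset_inter_right hXY)).trans_lt (hY p hp)

theorem subset_addIfFits (X : Finset α) (a : α) : X ⊆ addIfFits S cap X a := by
  unfold addIfFits; split_ifs
  exacts [subset_insert a X, subset_rfl]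

theorem greedy_subset (A : Finset α) (l : List α) : greedy S cap A l ⊆ A := by
  induction l with
  | nil => exact empty_subset A
  | cons a l ih =>
    simp only [greedy, addIfFits]
    split_ifs with ha
    exacts [insert_subset ha ih, ih, ih]

theorem mem_of_mem_greedy {A : Finset α} {l : List α} {e : α} (he : e ∈ greedy S cap A l) :
    e ∈ l := by
  induction l with
  | nil => simp [greedy] at he
  | cons a l ih =>
    simp only [greedy, addIfFits] at he
    split_ifs at he
    · rcases mem_insert.1 he with rfl | he
      exacts [List.mem_cons_self, List.mem_cons_of_mem a (ih he)]
    all_goals exact List.mem_cons_of_mem a (ih he)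

theorem greedy_subset_greedy_cons (A : Finset α) (l : List α) (a : α) :
    greedy S cap A l ⊆ greedy S cap A (a :: l) := by
  simp only [greedy]
  split_ifs
  exacts [subset_addIfFits _ _, subset_rfl]

theorem card_greedy_inter_le (A : Finset α) (l : List α) (p : ι) :
    #(greedy S cap A l ∩ S p) ≤ cap p := by
  induction l with
  | nil => simp [greedy]
  | cons a l ih =>
    simp only [greedy, addIfFits]
    split_ifs with _ hfit
    · by_cases hap : a ∈ S p
      · rw [insert_inter_of_mem hap]
        exact (card_insert_le _ _).trans (hfit p hap)
      · rwa [insert_inter_of_notMem hap]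
    all_goals exact ih

theorem greedy_congr {A B : Finset α} {l : List α} (h : ∀ e ∈ l, e ∈ A ↔ e ∈ B) :
    greedy S cap A l = greedy S cap B l := by
  induction l with
  | nil => rfl
  | cons a l ih =>
    simp only [greedy, ih fun e he => h e (List.mem_cons_of_mem a he),
      h a List.mem_cons_self]

/-- Under `l.Pairwise R`, `R e x` holds for every `x` considered before `e`. -/
theorem exists_full_of_notMem_greedy {R : α → α → Prop} [DecidableRel R] {A : Finset α}
    {l : List α} (hl : l.Pairwise R) {e : α} (hel : e ∈ l) (heA : e ∈ A) (hrej : e ∉ greedy S cap A l) :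
    ∃ p, e ∈ S p ∧ cap p ≤ #((greedy S cap A l ∩ S p).filter (R e)) := by
  induction l with
  | nil => simp at hel
  | cons a l ih =>
    obtain ⟨hRa, hl⟩ := List.pairwise_cons.1 hl
    have hmono : greedy S cap A l ⊆ greedy S cap A (a :: l) := greedy_subset_greedy_cons A l a
    rcases List.mem_cons.1 hel with rfl | hel
    · have hfit : ¬ Fits S cap (greedy S cap A l) e := fun hfit => hrej <| by
        simp only [greedy, heA, if_true, addIfFits, hfit]
        exact mem_insert_self e _
      simp only [Fits, not_forall, not_lt] at hfit
      obtain ⟨p, hep, hfull⟩ := hfit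
      refine ⟨p, hep, hfull.trans (card_le_card fun x hx => ?_)⟩
      have hxl := mem_of_mem_greedy (mem_inter.1 hx).1
      exact mem_filter.2 ⟨inter_subset_inter_right hmono hx, hRa x hxl⟩
    · obtain ⟨p, hep, hfull⟩ := ih hl hel fun h => hrej (hmono h)
      exact ⟨p, hep, hfull.trans (card_le_card (filter_subset_filter _
        (inter_subset_inter_right hmono)))⟩

end LaminarGreedy

section Exchange

variable {α ι : Type*} [DecidableEq α] {S : ι → Finset α} {cap : ι → ℕ}

theorem card_insert_erase_inter_add {G T : Finset α} {f g : α} (hf : f ∉ G) (hg : g ∈ G) :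
    #(insert f (G.erase g) ∩ T) + (if g ∈ T then 1 else 0) =
      #(G ∩ T) + (if f ∈ T then 1 else 0) := by
  simp only [← filter_mem_eq_inter, card_filter]
  rw [sum_insert fun h => hf (mem_of_mem_erase h), ← add_sum_erase _ _ hg]
  omega

theorem card_insert_erase_inter_le {G T : Finset α} {f g : α} (hf : f ∉ G) (hg : g ∈ G)
    (hfg : f ∈ T → g ∈ T) : #(insert f (G.erase g) ∩ T) ≤ #(G ∩ T) := by
  have := card_insert_erase_inter_add (T := T) hf hg
  split_ifs at this <;> simp_all

theorem card_inter_le_insert_erase {G T : Finset α} {f g : α} (hf : f ∉ G) (hg : g ∈ G)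
    (hgf : g ∈ T → f ∈ T) : #(G ∩ T) ≤ #(insert f (G.erase g) ∩ T) := by
  have := card_insert_erase_inter_add (T := T) hf hg
  split_ifs at this <;> simp_all

/-- A quota containing `f` but not `g` lies inside the full quota `p₀` by laminarity. -/
theorem Fits.of_exchange (hlam : IsLaminar S) {X Y : Finset α} {f g a : α} {p₀ : ι}
    (hf : f ∈ S p₀) (hg : g ∈ S p₀) (hfull : cap p₀ ≤ #(X ∩ S p₀))
    (hle : ∀ p, (f ∈ S p → g ∈ S p) → #(Y ∩ S p) ≤ #(X ∩ S p))
    (hX : Fits S cap X a) : Fits S cap Y a := by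
  intro p hap
  by_cases hfg : f ∈ S p → g ∈ S p
  · exact (hle p hfg).trans_lt (hX p hap)
  · obtain ⟨hfp, hgp⟩ := Classical.not_imp.1 hfg
    rcases hlam p p₀ ⟨f, mem_inter.2 ⟨hfp, hf⟩⟩ with h | h
    · exact absurd (hX p₀ (h hap)) (not_lt.2 hfull)
    · exact absurd (h hg) hgp

variable (S cap)

/-- The invariant relating the greedy choices from `A` and from `insert f A` along the list. -/
def GreedyExchange (f : α) (G G' : Finset α) : Prop :=
  G' = G ∨ (f ∉ G ∧ G' = insert f G) ∨
    ∃ g ∈ G, f ∉ G ∧ G' = insert f (G.erase g) ∧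
      ∃ p, g ∈ S p ∧ f ∈ S p ∧ cap p ≤ #(G' ∩ S p)

variable {S cap}

theorem GreedyExchange.subset_insert {f : α} {G G' : Finset α}
    (h : GreedyExchange S cap f G G') : G' ⊆ insert f G := by
  rcases h with rfl | ⟨-, rfl⟩ | ⟨g, -, -, rfl, -⟩
  · exact Finset.subset_insert f G'
  · exact subset_rfl
  · exact insert_subset_insert f (erase_subset g G)

theorem greedyExchange_addIfFits_insert {f a : α} {G : Finset α} (hfG : f ∉ G) (haf : a ≠ f)
    (haG : a ∉ G) :
    GreedyExchange S cap f (addIfFits S cap G a) (addIfFits S cap (insert f G) a) := by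
  have hfaG : f ∉ insert a G := by simp [hfG, Ne.symm haf]
  unfold addIfFits
  by_cases hfit' : Fits S cap (insert f G) a
  · rw [if_pos hfit', if_pos (hfit'.mono (Finset.subset_insert f G)), Finset.insert_comm]
    exact Or.inr (Or.inl ⟨hfaG, rfl⟩)
  rw [if_neg hfit']
  by_cases hfit : Fits S cap G a
  · rw [if_pos hfit]
    simp only [Fits, not_forall, not_lt] at hfit'
    obtain ⟨p, hap, hfull⟩ := hfit'
    have hfp : f ∈ S p := by
      by_contra hfp
      rw [insert_inter_of_notMem hfp] at hfull
      exact (hfit p hap).not_ge hfull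
    refine Or.inr (Or.inr ⟨a, mem_insert_self a G, hfaG, by rw [erase_insert haG], p, hap, hfp,
      hfull⟩)
  · rw [if_neg hfit]
    exact Or.inr (Or.inl ⟨hfG, rfl⟩)

theorem greedyExchange_addIfFits_swap (hlam : IsLaminar S) {f g a : α} {G : Finset α} {p₀ : ι}
    (hgG : g ∈ G) (hfG : f ∉ G) (haf : a ≠ f) (haG : a ∉ G) (hgp : g ∈ S p₀) (hfp : f ∈ S p₀)
    (hfull : cap p₀ ≤ #(insert f (G.erase g) ∩ S p₀)) :
    GreedyExchange S cap f (addIfFits S cap G a) (addIfFits S cap (insert f (G.erase g)) a) := by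
  have hfull' : cap p₀ ≤ #(G ∩ S p₀) :=
    hfull.trans (card_insert_erase_inter_le hfG hgG fun _ => hgp)
  have hiff : Fits S cap G a ↔ Fits S cap (insert f (G.erase g)) a :=
    ⟨Fits.of_exchange hlam hfp hgp hfull' fun _ => card_insert_erase_inter_le hfG hgG,
      Fits.of_exchange hlam hgp hfp hfull fun _ => card_inter_le_insert_erase hfG hgG⟩
  unfold addIfFits
  by_cases hfit : Fits S cap G a
  · rw [if_pos hfit, if_pos (hiff.1 hfit)]
    have hag : a ≠ g := fun h => haG (h ▸ hgG)
    refine Or.inr (Or.inr ⟨g, mem_insert_of_mem hgG, by simp [hfG, Ne.symm haf], ?_, p₀, hgp,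
      hfp, hfull.trans (card_le_card (inter_subset_inter_right (Finset.subset_insert a _)))⟩)
    rw [erase_insert_of_ne hag, Finset.insert_comm]
  · rw [if_neg hfit, if_neg (mt hiff.2 hfit)]
    exact Or.inr (Or.inr ⟨g, hgG, hfG, rfl, p₀, hgp, hfp, hfull⟩)

theorem GreedyExchange.addIfFits (hlam : IsLaminar S) {f a : α} {G G' : Finset α}
    (h : GreedyExchange S cap f G G') (haf : a ≠ f) (haG : a ∉ G) :
    GreedyExchange S cap f (addIfFits S cap G a) (addIfFits S cap G' a) := by
  rcases h with rfl | ⟨hfG, rfl⟩ | ⟨g, hgG, hfG, rfl, p, hgp, hfp, hfull⟩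
  · exact Or.inl rfl
  · exact greedyExchange_addIfFits_insert hfG haf haG
  · exact greedyExchange_addIfFits_swap hlam hgG hfG haf haG hgp hfp hfull

theorem greedyExchange_greedy (hlam : IsLaminar S) {f : α} {A : Finset α} (hfA : f ∉ A)
    {l : List α} (hl : l.Nodup) :
    GreedyExchange S cap f (greedy S cap A l) (greedy S cap (insert f A) l) := by
  induction l with
  | nil => exact Or.inl rfl
  | cons a l ih =>
    obtain ⟨hal, hl⟩ := List.nodup_cons.1 hl
    have haG : a ∉ greedy S cap A l := fun h => hal (mem_of_mem_greedy h)
    by_cases haf : a = f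
    · subst haf
      have hsame : greedy S cap (insert a A) l = greedy S cap A l :=
        greedy_congr fun e he => by simp [ne_of_mem_of_not_mem he hal]
      simp only [greedy, mem_insert_self, if_true, hfA, if_false, hsame, addIfFits]
      split_ifs
      exacts [Or.inr (Or.inl ⟨haG, rfl⟩), Or.inl rfl]
    · have hmem : a ∈ insert f A ↔ a ∈ A := by simp [haf]
      simp only [greedy, hmem]
      split_ifs
      exacts [(ih hl).addIfFits hlam haf haG, ih hl]

theorem greedy_insert_subset (hlam : IsLaminar S) {l : List α} (hl : l.Nodup) (A : Finset α)
    (f : α) : greedy S cap (insert f A) l ⊆ insert f (greedy S cap A l) := by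
  by_cases hfA : f ∈ A
  · rw [insert_eq_of_mem hfA]
    exact Finset.subset_insert f _
  · exact (greedyExchange_greedy hlam hfA hl).subset_insert

end Exchange

section DeferredAcceptance

variable {α β : Type*}

/-- A set of offers `A ⊆ E` that can arise in the cumulative-offer process with choice function
`ch`: every applicant has made her offers in order of preference (smaller rank `r` first), and
an offer she has held is her latest one. -/
structure IsOfferPool (E : Finset (α × β)) (r : α → β → ℕ)
    (ch : Finset (α × β) → Finset (α × β)) (A : Finset (α × β)) : Prop where
  subset : A ⊆ E
  mem_of_lt {i j j'} : (i, j) ∈ A → (i, j') ∈ E → r i j' < r i j → (i, j') ∈ A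
  le_of_mem_ch {i j j'} : (i, j) ∈ ch A → (i, j') ∈ A → r i j' ≤ r i j

variable {E : Finset (α × β)} {r : α → β → ℕ} {ch : Finset (α × β) → Finset (α × β)}

theorem isOfferPool_empty (hch : ∀ A, ch A ⊆ A) : IsOfferPool E r ch ∅ where
  subset := empty_subset E
  mem_of_lt h := absurd h (notMem_empty _)
  le_of_mem_ch h := absurd (hch ∅ h) (notMem_empty _)

/-- An applicant holding no offer makes her best offer not made yet; substitutability of `ch`
keeps her the only one whose held offer can change. -/
theorem IsOfferPool.exists_insert [DecidableEq α] [DecidableEq β]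
    (hsub : ∀ A e, ch (insert e A) ⊆ insert e (ch A)) {A : Finset (α × β)}
    (hA : IsOfferPool E r ch A) {i : α} (hi : ∀ j, (i, j) ∉ ch A) {j₀ : β} (hj₀E : (i, j₀) ∈ E)
    (hj₀A : (i, j₀) ∉ A) : ∃ e ∉ A, IsOfferPool E r ch (insert e A) := by
  obtain ⟨⟨i', j⟩, hmem, hmin⟩ := exists_min_image ((E \ A).filter (·.1 = i))
    (fun e => r e.1 e.2) ⟨(i, j₀), by simp [hj₀E, hj₀A]⟩
  obtain ⟨⟨hjE, hjA⟩, rfl⟩ : ((i', j) ∈ E ∧ (i', j) ∉ A) ∧ i' = i := by simpa using hmem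
  have hbest : ∀ j', (i', j') ∈ E → r i' j' < r i' j → (i', j') ∈ A := fun j' hj'E hlt => by
    by_contra hj'A
    exact (hmin (i', j') (by simp [hj'E, hj'A])).not_gt hlt
  refine ⟨(i', j), hjA, insert_subset hjE hA.subset, fun {i j₁ j₂} h₁ h₂E hlt => ?_,
    fun {i j₁ j₂} h₁ h₂ => ?_⟩
  · rcases mem_insert.1 h₁ with h | h
    · obtain ⟨rfl, rfl⟩ := Prod.mk.inj h
      exact mem_insert_of_mem (hbest j₂ h₂E hlt)
    · exact mem_insert_of_mem (hA.mem_of_lt h h₂E hlt)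
  · rcases mem_insert.1 (hsub A _ h₁) with h | h
    · obtain ⟨rfl, rfl⟩ := Prod.mk.inj h
      rcases mem_insert.1 h₂ with h₂ | h₂
      · rw [(Prod.mk.inj h₂).2]
      · exact not_lt.1 fun hlt => hjA (hA.mem_of_lt h₂ hjE hlt)
    · have hii' : i ≠ i' := by rintro rfl; exact hi j₁ h
      rcases mem_insert.1 h₂ with h₂ | h₂
      · exact absurd (Prod.mk.inj h₂).1 hii'
      · exact hA.le_of_mem_ch h h₂

/-- An offer pool of maximal size is one where the cumulative-offer process has stopped. -/
theorem exists_isOfferPool_forall_held_or_exhausted [DecidableEq α] [DecidableEq β]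
    (hch : ∀ A, ch A ⊆ A)
    (hsub : ∀ A e, ch (insert e A) ⊆ insert e (ch A)) :
    ∃ B, IsOfferPool E r ch B ∧ ∀ i, (∃ j, (i, j) ∈ ch B) ∨ ∀ j, (i, j) ∈ E → (i, j) ∈ B := by
  obtain ⟨B, hBmem, hBmax⟩ := exists_max_image (E.powerset.filter (IsOfferPool E r ch)) card
    ⟨∅, mem_filter.2 ⟨empty_mem_powerset E, isOfferPool_empty hch⟩⟩
  have hB : IsOfferPool E r ch B := (mem_filter.1 hBmem).2
  refine ⟨B, hB, fun i => ?_⟩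
  by_contra! hstuck
  obtain ⟨hi, j₀, hj₀E, hj₀B⟩ := hstuck
  obtain ⟨e, heB, he⟩ := hB.exists_insert hsub hi hj₀E hj₀B
  have := hBmax (insert e B) (mem_filter.2 ⟨mem_powerset.2 he.subset, he⟩)
  rw [card_insert_of_notMem heB] at this
  omega

theorem IsOfferPool.eq_of_mem_ch (hch : ∀ A, ch A ⊆ A)
    (hr : ∀ i j k, (i, j) ∈ E → (i, k) ∈ E → r i j = r i k → j = k) {B : Finset (α × β)}
    (hB : IsOfferPool E r ch B) {i : α} {j j' : β} (hj : (i, j) ∈ ch B) (hj' : (i, j') ∈ ch B) :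
    j = j' :=
  hr i j j' (hB.subset (hch B hj)) (hB.subset (hch B hj')) <|
    le_antisymm (hB.le_of_mem_ch hj' (hch B hj)) (hB.le_of_mem_ch hj (hch B hj'))

end DeferredAcceptance

theorem Finset.exists_list_nodup_pairwise_le {α γ : Type*} [LinearOrder γ] (E : Finset α)
    (key : α → γ) :
    ∃ l : List α, l.Nodup ∧ (∀ a, a ∈ l ↔ a ∈ E) ∧ l.Pairwise (fun a b => key a ≤ key b) := by
  have hperm := E.toList.mergeSort_perm (fun a b => decide (key a ≤ key b))
  refine ⟨_, hperm.nodup_iff.2 E.nodup_toList, fun a => hperm.mem_iff.trans E.mem_toList, ?_⟩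
  simpa using E.toList.pairwise_mergeSort (le := fun a b => decide (key a ≤ key b))
    (fun a b c hab hbc => by simp only [decide_eq_true_eq] at *; exact hab.trans hbc)
    (fun a b => by simpa using le_total (key a) (key b))

section CommonQuotas

variable {n m q : ℕ}

def edgeIndicator (M : Finset (Fin n × Fin m)) : Fin n → Fin m → ℕ :=
  fun i j => if (i, j) ∈ M then 1 else 0

def quotaEdges (Cs : Fin q → Finset (Fin m)) (p : Fin q) : Finset (Fin n × Fin m) :=
  univ.filter (·.2 ∈ Cs p)

@[simp]
theorem mem_quotaEdges {Cs : Fin q → Finset (Fin m)} {p : Fin q} {e : Fin n × Fin m} :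
    e ∈ quotaEdges Cs p ↔ e.2 ∈ Cs p := by
  simp [quotaEdges]

theorem sum_sum_edgeIndicator (M : Finset (Fin n × Fin m)) (T : Fin n → Finset (Fin m)) :
    ∑ i, ∑ j ∈ T i, edgeIndicator M i j = #(M.filter fun e => e.2 ∈ T e.1) := by
  have : M.filter (fun e => e.2 ∈ T e.1) = univ.filter (fun e => e.2 ∈ T e.1 ∧ e ∈ M) := by
    ext; simp [and_comm]
  rw [this, card_filter, Fintype.sum_prod_type]
  simp only [edgeIndicator, ite_and, ← sum_filter, filter_mem_eq_inter, univ_inter]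

theorem countIn_edgeIndicator (Cs : Fin q → Finset (Fin m)) (M : Finset (Fin n × Fin m))
    (p : Fin q) : countIn Cs (edgeIndicator M) p = #(M ∩ quotaEdges Cs p) := by
  rw [countIn, sum_sum_edgeIndicator]
  congr 1
  ext e
  simp

theorem countHigher_edgeIndicator (Cs : Fin q → Finset (Fin m)) (s : Fin n → Fin m → ℕ)
    (M : Finset (Fin n × Fin m)) (p : Fin q) (σ : ℕ) :
    countHigher Cs s (edgeIndicator M) p σ =
      #((M ∩ quotaEdges Cs p).filter fun e => σ < s e.1 e.2) := by
  rw [countHigher, sum_sum_edgeIndicator]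
  congr 1
  ext e
  simp [and_assoc]

theorem isLaminar_quotaEdges {Cs : Fin q → Finset (Fin m)}
    (hnested : ∀ p p', ((Cs p) ∩ (Cs p')).Nonempty → Cs p ⊆ Cs p' ∨ Cs p' ⊆ Cs p) :
    IsLaminar (quotaEdges (n := n) Cs) := by
  rintro p p' ⟨e, he⟩
  simp only [mem_inter, mem_quotaEdges] at he
  rcases hnested p p' ⟨e.2, mem_inter.2 he⟩ with h | h
  · exact Or.inl (monotone_filter_right _ fun _ _ hj => h hj)
  · exact Or.inr (monotone_filter_right _ fun _ _ hj => h hj)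

/-- Offers are ranked by score, ties broken in favour of the applicant's preferred college. -/
def offerPriority (r s : Fin n → Fin m → ℕ) (e : Fin n × Fin m) : ℕ ×ₗ ℕᵒᵈ :=
  toLex (s e.1 e.2, OrderDual.toDual (r e.1 e.2))

theorem lt_score_of_offerPriority_le {E : Finset (Fin n × Fin m)} {r s : Fin n → Fin m → ℕ}
    {Cs : Fin q → Finset (Fin m)}
    (hsstrict : ∀ p j k i i', i ≠ i' → j ∈ Cs p → k ∈ Cs p →
      (i, j) ∈ E → (i', k) ∈ E → s i j ≠ s i' k)
    {M : Finset (Fin n × Fin m)} (hME : M ⊆ E) {i : Fin n} {j : Fin m} (hij : (i, j) ∈ E)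
    (hpref : ∀ k, (i, k) ∈ M → r i j < r i k) {p : Fin q} (hjp : j ∈ Cs p)
    {e : Fin n × Fin m} (heM : e ∈ M) (hep : e.2 ∈ Cs p)
    (hprio : offerPriority r s (i, j) ≤ offerPriority r s e) : s i j < s e.1 e.2 := by
  obtain ⟨i', k⟩ := e
  rcases Prod.Lex.toLex_le_toLex.1 hprio with hlt | ⟨hseq, hrle⟩
  · exact hlt
  by_cases hi : i' = i
  · subst hi
    exact absurd (hpref k heM) (not_lt.2 (OrderDual.toDual_le_toDual.1 hrle))
  · exact absurd hseq (hsstrict p j k i i' (Ne.symm hi) hjp hep hij (hME heM))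

theorem feasibleCQ_edgeIndicator {E : Finset (Fin n × Fin m)} {u : Fin m → ℕ}
    {Cs : Fin q → Finset (Fin m)} {uq : Fin q → ℕ} (hsingle : ∀ j, ∃ p, Cs p = {j} ∧ uq p = u j)
    {M : Finset (Fin n × Fin m)} (hME : M ⊆ E)
    (hM : ∀ i j j', (i, j) ∈ M → (i, j') ∈ M → j = j')
    (hquota : ∀ p, #(M ∩ quotaEdges Cs p) ≤ uq p) :
    FeasibleCQ E u Cs uq (edgeIndicator M) := by
  have hcount p : countIn Cs (edgeIndicator M) p ≤ uq p :=
    (countIn_edgeIndicator Cs M p).trans_le (hquota p)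
  refine ⟨fun i j => by unfold edgeIndicator; split_ifs <;> omega, fun i j h => hME ?_,
    fun i => ?_, fun j => ?_, hcount⟩
  · by_contra hij
    simp [edgeIndicator, hij] at h
  · simp only [edgeIndicator, ← card_filter]
    exact card_le_one.2 fun j hj j' hj' => hM i j j' (mem_filter.1 hj).2 (mem_filter.1 hj').2
  · obtain ⟨p, hp, hup⟩ := hsingle j
    simpa [countIn, hp, hup] using hcount p

theorem stableCQ_edgeIndicator {E : Finset (Fin n × Fin m)} {r s : Fin n → Fin m → ℕ}
    {Cs : Fin q → Finset (Fin m)} {uq : Fin q → ℕ} {M : Finset (Fin n × Fin m)}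
    (h : ∀ i j, (i, j) ∈ E → (∀ k, (i, k) ∈ M → r i j < r i k) →
      ∃ p, j ∈ Cs p ∧ uq p ≤ #((M ∩ quotaEdges Cs p).filter fun e => s i j < s e.1 e.2)) :
    StableCQ E r s Cs uq (edgeIndicator M) := by
  intro i j hij hpref
  simp only [countHigher_edgeIndicator]
  exact h i j hij fun k hk => hpref k (by simp [edgeIndicator, hk])

end CommonQuotas

theorem nested_commonQuotas_stable_exists_general {n m q : ℕ}
    (E : Finset (Fin n × Fin m)) (r s : Fin n → Fin m → ℕ) (u : Fin m → ℕ)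
    (Cs : Fin q → Finset (Fin m)) (uq : Fin q → ℕ)
    (hsingle : ∀ j, ∃ p, Cs p = {j} ∧ uq p = u j)
    (hrstrict : ∀ i j k, (i, j) ∈ E → (i, k) ∈ E → r i j = r i k → j = k)
    (hsstrict : ∀ p j k i i', i ≠ i' → j ∈ Cs p → k ∈ Cs p →
      (i, j) ∈ E → (i', k) ∈ E → s i j ≠ s i' k)
    (hnested : ∀ p p', ((Cs p) ∩ (Cs p')).Nonempty →
      Cs p ⊆ Cs p' ∨ Cs p' ⊆ Cs p) :
    ∃ x : Fin n → Fin m → ℕ,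
      FeasibleCQ E u Cs uq x ∧ StableCQ E r s Cs uq x := by
  obtain ⟨L, hLnd, hLE, hLsorted⟩ := E.exists_list_nodup_pairwise_le (offerPriority r s)
  set ch := fun A => greedy (quotaEdges Cs) uq A L
  have hch : ∀ A, ch A ⊆ A := fun A => greedy_subset A L
  obtain ⟨B, hB, hdone⟩ := exists_isOfferPool_forall_held_or_exhausted (E := E) (r := r) hch
    (greedy_insert_subset (isLaminar_quotaEdges hnested) hLnd)
  have hME : ch B ⊆ E := (hch B).trans hB.subset
  refine ⟨edgeIndicator (ch B), feasibleCQ_edgeIndicator hsingle hME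
    (fun i j j' => hB.eq_of_mem_ch hch hrstrict) (card_greedy_inter_le B L),
    stableCQ_edgeIndicator fun i j hij hpref => ?_⟩
  have hjB : (i, j) ∈ B := by
    rcases hdone i with ⟨k, hk⟩ | hall
    exacts [hB.mem_of_lt (hch B hk) hij (hpref k hk), hall j hij]
  obtain ⟨p, hjp, hfull⟩ := exists_full_of_notMem_greedy hLsorted ((hLE _).2 hij) hjB
    fun h => (hpref j h).false
  rw [mem_quotaEdges] at hjp
  refine ⟨p, hjp, hfull.trans (card_le_card fun e he => ?_)⟩
  simp only [mem_filter, mem_inter, mem_quotaEdges] at he ⊢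
  exact ⟨he.1, lt_score_of_offerPriority_le hsstrict hME hij hpref hjp he.1.1 he.1.2 he.2⟩

/-- If the family of quota-sets of a College Admissions
instance with common quotas is nested (any two quota-sets are disjoint or one
contains the other) and preferences are strict, then a stable matching
exists. -/
theorem nested_commonQuotas_stable_exists {n m q : ℕ}
    (E : Finset (Fin n × Fin m)) (r s : Fin n → Fin m → ℕ) (u : Fin m → ℕ)
    (Cs : Fin q → Finset (Fin m)) (uq : Fin q → ℕ)
    (hsingle : ∀ j, ∃ p, Cs p = {j} ∧ uq p = u j)
    (hsame : ∀ p j k i, j ∈ Cs p → k ∈ Cs p → (i, j) ∈ E → (i, k) ∈ E →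
      s i j = s i k)
    (hrstrict : ∀ i j k, (i, j) ∈ E → (i, k) ∈ E → r i j = r i k → j = k)
    (hsstrict : ∀ p j k i i', i ≠ i' → j ∈ Cs p → k ∈ Cs p →
      (i, j) ∈ E → (i', k) ∈ E → s i j ≠ s i' k)
    (hnested : ∀ p p', ((Cs p) ∩ (Cs p')).Nonempty →
      Cs p ⊆ Cs p' ∨ Cs p' ⊆ Cs p) :
    ∃ x : Fin n → Fin m → ℕ,
      FeasibleCQ E u Cs uq x ∧ StableCQ E r s Cs uq x :=
  nested_commonQuotas_stable_exists_general E r s u Cs uq hsingle hrstrict hsstrict hnested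
end

section
/- In the College Admissions problem with ties, every H-stable set of score-limits induces a matching in which each college admits at most u_j students, and the applicant-optimal H-stable set of score-limits is pointwise less than or equal to (componentwise minimal among) every H-stable set of score-limits. -/
open Finset
open scoped Classical

open Finset

/-- `t⋆` is the applicant-optimal H-stable set of score-limits: it is
H-stable and every applicant weakly prefers her college under `t⋆` to her
college under any other H-stable set of score-limits. -/
noncomputable def ApplicantOptimalHStable {n m : ℕ} (E : Finset (Fin n × Fin m))
    (r s : Fin n → Fin m → ℕ) (u : Fin m → ℕ) (tstar : Fin m → ℕ) : Prop :=
  HStable E r s u tstar ∧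
  ∀ t, HStable E r s u t → ∀ i j, Assigned E r s t i j →
    ∃ k, Assigned E r s tstar i k ∧ r i k ≤ r i j

/-- Every H-stable set of score-limits induces a matching
respecting all upper quotas, and the applicant-optimal H-stable set of
score-limits is pointwise less than or equal to every H-stable set of
score-limits. -/
theorem HStable_quota_and_optimal_minimal {n m : ℕ}
    (E : Finset (Fin n × Fin m)) (r s : Fin n → Fin m → ℕ) (u : Fin m → ℕ)
    (hrstrict : ∀ i j k, (i, j) ∈ E → (i, k) ∈ E → r i j = r i k → j = k) :
    (∀ t, HStable E r s u t → ∀ j, numAssigned E r s t j ≤ u j) ∧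
    (∀ tstar, ApplicantOptimalHStable E r s u tstar →
      ∀ t, HStable E r s u t → ∀ j, tstar j ≤ t j) := by
  have exists_assigned : ∀ (t : Fin m → ℕ) (i : Fin n) (j : Fin m),
      (i, j) ∈ E → t j ≤ s i j → ∃ k, Assigned E r s t i k ∧ r i k ≤ r i j := by
    intro t i j hij hs
    obtain ⟨k, hk, hmin⟩ := Finset.exists_min_image
      (univ.filter fun k => (i, k) ∈ E ∧ t k ≤ s i k) (r i)
      ⟨j, by simp [hij, hs]⟩
    simp only [mem_filter, mem_univ, true_and] at hk
    refine ⟨k, ⟨hk.1, hk.2, fun l hl hsl => hmin l ?_⟩, hmin j (by simp [hij, hs])⟩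
    simp [hl, hsl]
  constructor
  · intro t ht j; exact ht.1 j
  · intro tstar hstar t ht j
    by_contra hlt
    push_neg at hlt
    have hpos : 0 < tstar j := lt_of_le_of_lt (Nat.zero_le _) hlt
    set t' := Function.update tstar j (tstar j - 1) with ht'
    have hcard : u j < numAssigned E r s t' j := hstar.1.2 j hpos
    have hsub : ∀ i, Assigned E r s t' i j → Assigned E r s tstar i j := by
      intro i hA
      obtain ⟨hiE, hsij, hbest⟩ := hA
      have ht'j : t' j = tstar j - 1 := Function.update_self _ _ _
      have htj : t j ≤ s i j := by
        have h1 : t j ≤ tstar j - 1 := Nat.le_sub_one_of_lt hlt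
        calc t j ≤ tstar j - 1 := h1
          _ ≤ s i j := ht'j ▸ hsij
      obtain ⟨k0, hk0, hk0r⟩ := exists_assigned t i j hiE htj
      obtain ⟨k', hk', hk'r⟩ := hstar.2 t ht i k0 hk0
      have hk'E : (i, k') ∈ E := hk'.1
      have hach : t' k' ≤ s i k' := by
        have : t' k' ≤ tstar k' := by
          by_cases h : k' = j
          · subst h; rw [ht'j]; exact Nat.sub_le _ _
          · rw [ht', Function.update_of_ne h]
        exact le_trans this hk'.2.1
      have h1 : r i j ≤ r i k' := hbest k' hk'E hach
      have h2 : r i k' ≤ r i j := le_trans hk'r hk0r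
      have hkj : k' = j := hrstrict i k' j hk'E hiE (le_antisymm h2 h1)
      exact hkj ▸ hk'
    have hc : numAssigned E r s t' j ≤ numAssigned E r s tstar j := by
      apply Finset.card_le_card
      intro i hi
      simp only [mem_filter, mem_univ, true_and] at hi ⊢
      exact hsub i hi
    exact absurd (hstar.1.1 j) (not_le.mpr (lt_of_lt_of_le hcard hc))
end
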